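/- arXiv:1603.03671 — 7 statements merged into one kernel-verified Lean document; each statement's English description precedes it below -/
import Mathlib

section
/- Let R₁ and R₂ be countable simple graphs having property (R), let A ⊆ V(R₁) and B ⊆ V(R₂) be finite subsets, and let φ : A → B be an isomorphism between the subgraphs induced on A and B. Then φ extends to a graph isomorphism φ̄ : R₁ ≅ R₂, i.e. φ̄(a) = φ(a) for all a ∈ A. -/
/-!
Back and forth. Encode a partial isomorphism as a finite set of pairs `(a, b)` any two of which
agree on equality and on adjacency. Property (R) of the target graph extends such a set by one
vertex `a` of the source: take `z` adjacent exactly to the images of the neighbours of `a`. By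
symmetry the same holds on the other side, so the sets of partial isomorphisms defined at a given
vertex are cofinal; countably many of them are met by one ideal above the given partial
isomorphism, and the union of that ideal is the graph of an isomorphism.
-/

/-- A simple graph has property (R) if for all disjoint finite subsets `U`, `W` of its
vertex set there exists a vertex outside `U ∪ W` adjacent to every vertex of `U` and to
no vertex of `W`. -/
def SimpleGraph.HasPropR {V : Type*} (G : SimpleGraph V) : Prop :=
  ∀ U W : Finset V, Disjoint U W →
    ∃ z, z ∉ U ∧ z ∉ W ∧ (∀ u ∈ U, G.Adj z u) ∧ (∀ w ∈ W, ¬ G.Adj z w)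

namespace SimpleGraph

variable {V W : Type*} (G : SimpleGraph V) (H : SimpleGraph W)

def IsPartialIso (s : Set (V × W)) : Prop :=
  ∀ p ∈ s, ∀ q ∈ s, (p.1 = q.1 ↔ p.2 = q.2) ∧ (G.Adj p.1 q.1 ↔ H.Adj p.2 q.2)

def FinPartialIso : Type _ :=
  {s : Finset (V × W) // G.IsPartialIso H s}

instance : Preorder (FinPartialIso G H) :=
  inferInstanceAs (Preorder {s : Finset (V × W) // G.IsPartialIso H s})

variable {G H}

theorem IsPartialIso.swap {s : Set (V × W)} (hs : G.IsPartialIso H s) :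
    H.IsPartialIso G (Prod.swap ⁻¹' s) :=
  fun p hp q hq => by
    obtain ⟨heq, hadj⟩ := hs p.swap hp q.swap hq
    exact ⟨heq.symm, hadj.symm⟩

theorem IsPartialIso.exists_iso {s : Set (V × W)} (hs : G.IsPartialIso H s)
    (hleft : ∀ a, ∃ b, (a, b) ∈ s) (hright : ∀ b, ∃ a, (a, b) ∈ s) :
    ∃ ψ : G ≃g H, ∀ p ∈ s, ψ p.1 = p.2 := by
  choose F hF using hleft
  have hF_eq : ∀ p ∈ s, F p.1 = p.2 := fun p hp => (hs _ (hF p.1) p hp).1.1 rfl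
  have hinj : F.Injective := fun a a' h => (hs _ (hF a) _ (hF a')).1.2 h
  have hsurj : F.Surjective := fun b =>
    let ⟨a, ha⟩ := hright b
    ⟨a, hF_eq (a, b) ha⟩
  exact ⟨⟨Equiv.ofBijective F ⟨hinj, hsurj⟩, fun {a a'} => (hs _ (hF a) _ (hF a')).2.symm⟩,
    hF_eq⟩

theorem IsPartialIso.insert_of_forall {s : Set (V × W)} (hs : G.IsPartialIso H s) {a : V} {b : W}
    (hp : ∀ q ∈ s, (q.1 = a ↔ q.2 = b) ∧ (G.Adj q.1 a ↔ H.Adj q.2 b)) :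
    G.IsPartialIso H (insert (a, b) s) := by
  simp only [IsPartialIso, Set.forall_mem_insert]
  refine ⟨⟨by simp, fun q hq => ?_⟩, fun q hq => ⟨hp q hq, hs q hq⟩⟩
  rw [eq_comm, (hp q hq).1, eq_comm, G.adj_comm, H.adj_comm]
  exact ⟨Iff.rfl, (hp q hq).2⟩

theorem IsPartialIso.exists_extend_left (hH : H.HasPropR) {s : Finset (V × W)}
    (hs : G.IsPartialIso H s) (a : V) :
    ∃ b, G.IsPartialIso H (insert (a, b) s) := by
  classical
  by_cases hdom : ∃ b, (a, b) ∈ s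
  · obtain ⟨b, hab⟩ := hdom
    exact ⟨b, hs.insert_of_forall fun q hq => hs q hq _ hab⟩
  push Not at hdom
  set U := (s.filter fun q => G.Adj q.1 a).image Prod.snd
  set U' := (s.filter fun q => ¬G.Adj q.1 a).image Prod.snd
  have hmem : ∀ q ∈ s, (G.Adj q.1 a → q.2 ∈ U) ∧ (¬G.Adj q.1 a → q.2 ∈ U') := fun q hq =>
    ⟨fun h => Finset.mem_image_of_mem _ (Finset.mem_filter.2 ⟨hq, h⟩),
      fun h => Finset.mem_image_of_mem _ (Finset.mem_filter.2 ⟨hq, h⟩)⟩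
  have hdisj : Disjoint U U' := by
    simp only [U, U', Finset.disjoint_left, Finset.mem_image, Finset.mem_filter]
    rintro _ ⟨p, ⟨hp, hpa⟩, rfl⟩ ⟨q, ⟨hq, hqa⟩, hpq⟩
    exact hqa ((hs q hq p hp).1.2 hpq ▸ hpa)
  obtain ⟨z, hzU, hzU', hadj, hnadj⟩ := hH U U' hdisj
  refine ⟨z, hs.insert_of_forall fun q hq => ⟨iff_of_false (fun h => hdom q.2 (h ▸ hq)) ?_, ?_⟩⟩
  · rintro rfl
    by_cases hqa : G.Adj q.1 a
    exacts [hzU ((hmem q hq).1 hqa), hzU' ((hmem q hq).2 hqa)]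
  · by_cases hqa : G.Adj q.1 a
    · exact iff_of_true hqa (hadj _ ((hmem q hq).1 hqa)).symm
    · exact iff_of_false hqa fun h => hnadj _ ((hmem q hq).2 hqa) h.symm

theorem IsPartialIso.exists_extend_right (hG : G.HasPropR) {s : Finset (V × W)}
    (hs : G.IsPartialIso H s) (b : W) :
    ∃ a, G.IsPartialIso H (insert (a, b) s) := by
  classical
  obtain ⟨a, ha⟩ := IsPartialIso.exists_extend_left hG (s := s.image Prod.swap)
    (by simpa only [Finset.coe_image, Set.image_swap_eq_preimage_swap] using hs.swap) b
  refine ⟨a, ?_⟩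
  convert ha.swap using 1
  ext
  simp [Prod.swap_eq_iff_eq_swap]

namespace FinPartialIso

open Classical in
def definedAt (hG : G.HasPropR) (hH : H.HasPropR) : V ⊕ W → Order.Cofinal (FinPartialIso G H)
  | .inl a =>
    { carrier := {f | ∃ b, (a, b) ∈ f.1}
      isCofinal := fun f =>
        let ⟨b, hb⟩ := IsPartialIso.exists_extend_left hH f.2 a
        ⟨⟨insert (a, b) f.1, by rwa [Finset.coe_insert]⟩,
          ⟨b, Finset.mem_insert_self _ _⟩, Finset.subset_insert _ _⟩ }
  | .inr b =>
    { carrier := {f | ∃ a, (a, b) ∈ f.1}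
      isCofinal := fun f =>
        let ⟨a, ha⟩ := IsPartialIso.exists_extend_right hG f.2 b
        ⟨⟨insert (a, b) f.1, by rwa [Finset.coe_insert]⟩,
          ⟨a, Finset.mem_insert_self _ _⟩, Finset.subset_insert _ _⟩ }

theorem isPartialIso_union_of_ideal (I : Order.Ideal (FinPartialIso G H)) :
    G.IsPartialIso H {p | ∃ f ∈ I, p ∈ f.1} := by
  rintro p ⟨f, hf, hp⟩ q ⟨g, hg, hq⟩
  obtain ⟨k, -, hfk, hgk⟩ := I.directed f hf g hg
  exact k.2 p (hfk hp) q (hgk hq)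

theorem exists_iso [Countable V] [Countable W] (hG : G.HasPropR) (hH : H.HasPropR)
    (f : FinPartialIso G H) :
    ∃ ψ : G ≃g H, ∀ p ∈ f.1, ψ p.1 = p.2 := by
  have : Encodable (V ⊕ W) := Encodable.ofCountable _
  have hmeets := Order.cofinal_meets_idealOfCofinals f (definedAt hG hH)
  obtain ⟨ψ, hψ⟩ := (isPartialIso_union_of_ideal (Order.idealOfCofinals f _)).exists_iso
    (fun a => let ⟨g, ⟨b, hb⟩, hg⟩ := hmeets (.inl a); ⟨b, g, hg, hb⟩)
    (fun b => let ⟨g, ⟨a, ha⟩, hg⟩ := hmeets (.inr b); ⟨a, g, hg, ha⟩)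
  exact ⟨ψ, fun p hp => hψ p ⟨f, Order.mem_idealOfCofinals f _, hp⟩⟩

end FinPartialIso

end SimpleGraph

theorem extension_of_partial_iso {V₁ V₂ : Type*} [Countable V₁] [Countable V₂]
    (R₁ : SimpleGraph V₁) (R₂ : SimpleGraph V₂)
    (h₁ : R₁.HasPropR) (h₂ : R₂.HasPropR)
    (A : Finset V₁) (B : Finset V₂) (φ : V₁ → V₂)
    (hbij : Set.BijOn φ (↑A : Set V₁) (↑B : Set V₂))
    (hiso : ∀ u ∈ A, ∀ v ∈ A, R₁.Adj u v ↔ R₂.Adj (φ u) (φ v)) :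
    ∃ ψ : R₁ ≃g R₂, ∀ a ∈ A, ψ a = φ a := by
  classical
  have hgraph : R₁.IsPartialIso R₂ ↑(A.image fun a => (a, φ a)) := by
    rw [Finset.coe_image]
    rintro _ ⟨u, hu, rfl⟩ _ ⟨v, hv, rfl⟩
    exact ⟨⟨congrArg φ, fun h => hbij.injOn hu hv h⟩, hiso u hu v hv⟩
  obtain ⟨ψ, hψ⟩ := SimpleGraph.FinPartialIso.exists_iso h₁ h₂ ⟨_, hgraph⟩
  exact ⟨ψ, fun a ha => hψ (a, φ a) (Finset.mem_image_of_mem _ ha)⟩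
end

section
/- Let R be a countable simple graph with property (R) and let U, W be disjoint finite sets of vertices of R. Then the subgraph induced on R_{U,W} := { z ∈ V(R) \ (U ∪ W) : z is adjacent to every vertex of U and to no vertex of W } is again a countable graph with property (R) (hence isomorphic to R). -/
namespace SimpleGraph

variable {V : Type*}

theorem hasPropR_induce_of_forall_exists (G : SimpleGraph V) {s : Set V}
    (h : ∀ A B : Finset V, ↑A ⊆ s → ↑B ⊆ s → Disjoint A B →
      ∃ z ∈ s, z ∉ A ∧ z ∉ B ∧ (∀ a ∈ A, G.Adj z a) ∧ ∀ b ∈ B, ¬ G.Adj z b) :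
    (G.induce s).HasPropR := by
  intro A B hAB
  have hsub (C : Finset s) : ↑(C.map (Function.Embedding.subtype _)) ⊆ s :=
    (Finset.coe_map_subset_range _ _).trans (Subtype.range_coe).subset
  obtain ⟨z, hzs, hzA, hzB, hadj, hnadj⟩ :=
    h _ _ (hsub A) (hsub B) (Finset.disjoint_map _ |>.mpr hAB)
  exact ⟨⟨z, hzs⟩, fun ha => hzA (Finset.mem_map_of_mem _ ha),
    fun hb => hzB (Finset.mem_map_of_mem _ hb), fun a ha => hadj _ (Finset.mem_map_of_mem _ ha),
    fun b hb => hnadj _ (Finset.mem_map_of_mem _ hb)⟩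

end SimpleGraph

theorem hasPropR_induce_RUW_general {V : Type*}
    (R : SimpleGraph V) (hR : R.HasPropR) (U W : Finset V) (hUW : Disjoint U W) :
    (R.induce {z : V | (z ∉ U ∧ z ∉ W) ∧ (∀ u ∈ U, R.Adj z u) ∧
      (∀ w ∈ W, ¬ R.Adj z w)}).HasPropR := by
  classical
  refine R.hasPropR_induce_of_forall_exists fun A B hA hB hAB => ?_
  have hAW : Disjoint A W := Finset.disjoint_left.2 fun a ha => (hA ha).1.2
  have hUB : Disjoint U B := Finset.disjoint_right.2 fun b hb => (hB hb).1.1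
  obtain ⟨z, hzUA, hzWB, hadj, hnadj⟩ := hR (U ∪ A) (W ∪ B) <| by
    simp only [Finset.disjoint_union_left, Finset.disjoint_union_right]
    exact ⟨⟨hUW, hAW⟩, hUB, hAB⟩
  rw [Finset.forall_mem_union] at hadj hnadj
  simp only [Finset.mem_union, not_or] at hzUA hzWB
  exact ⟨z, ⟨⟨hzUA.1, hzWB.1⟩, hadj.1, hnadj.1⟩, hzUA.2, hzWB.2, hadj.2, hnadj.2⟩

/-- For disjoint finite sets `U`, `W` of vertices of a countable graph `R` with property (R),
the induced subgraph on the set of vertices outside `U ∪ W` adjacent to every vertex of `U`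
and to no vertex of `W` again has property (R). -/
theorem hasPropR_induce_RUW {V : Type*} [Countable V]
    (R : SimpleGraph V) (hR : R.HasPropR) (U W : Finset V) (hUW : Disjoint U W) :
    (R.induce {z : V | (z ∉ U ∧ z ∉ W) ∧ (∀ u ∈ U, R.Adj z u) ∧
      (∀ w ∈ W, ¬ R.Adj z w)}).HasPropR :=
  hasPropR_induce_RUW_general R hR U W hUW
end

section
/- Every countable simple graph G is isomorphic to an induced subgraph of any countable simple graph R with property (R); that is, there exists an injective map f : V(G) → V(R) such that u is adjacent to v in G if and only if f(u) is adjacent to f(v) in R. -/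
open Finset

namespace SimpleGraph.HasPropR

open scoped Classical

variable {V : Type*} {R : SimpleGraph V}

noncomputable def extend (hR : R.HasPropR) (U W : Finset V) : V :=
  if h : Disjoint U W then (hR U W h).choose else (hR ∅ ∅ (disjoint_empty_left ∅)).choose

theorem extend_spec (hR : R.HasPropR) {U W : Finset V} (h : Disjoint U W) :
    hR.extend U W ∉ U ∧ hR.extend U W ∉ W ∧ (∀ u ∈ U, R.Adj (hR.extend U W) u) ∧
      ∀ w ∈ W, ¬ R.Adj (hR.extend U W) w := by
  rw [extend, dif_pos h]
  exact (hR U W h).choose_spec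

section

variable (hR : R.HasPropR) (G : SimpleGraph ℕ)

-- `attach` only makes the recursion visibly well founded; `greedyEmbed_eq` is the usable form.
noncomputable def greedyEmbed : ℕ → V
  | n => hR.extend (((range n).filter (G.Adj n)).attach.image fun k => greedyEmbed k.1)
      (((range n).filter fun k => ¬ G.Adj n k).attach.image fun k => greedyEmbed k.1)
decreasing_by all_goals exact mem_range.mp (mem_filter.mp k.2).1

theorem greedyEmbed_eq (n : ℕ) :
    hR.greedyEmbed G n = hR.extend (((range n).filter (G.Adj n)).image (hR.greedyEmbed G))
      (((range n).filter fun k => ¬ G.Adj n k).image (hR.greedyEmbed G)) := by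
  rw [greedyEmbed]
  congr 1 <;> ext <;> simp

theorem greedyEmbed_ne_and_adj_iff_of_lt {m n : ℕ} (hmn : m < n) :
    hR.greedyEmbed G m ≠ hR.greedyEmbed G n ∧
      (R.Adj (hR.greedyEmbed G n) (hR.greedyEmbed G m) ↔ G.Adj n m) := by
  induction n using Nat.strong_induction_on generalizing m with
  | _ n ih =>
  have hinj : Set.InjOn (hR.greedyEmbed G) (range n) := fun a ha b hb hab ↦ by
    by_contra hne
    rcases Nat.lt_or_gt_of_ne hne with h | h
    · exact (ih b (mem_range.mp hb) h).1 hab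
    · exact (ih a (mem_range.mp ha) h).1 hab.symm
  have hdisj : Disjoint (((range n).filter (G.Adj n)).image (hR.greedyEmbed G))
      (((range n).filter fun k ↦ ¬ G.Adj n k).image (hR.greedyEmbed G)) := by
    simp only [Finset.disjoint_left, mem_image, mem_filter, not_exists, not_and]
    rintro _ ⟨a, ⟨ha, hna⟩, rfl⟩ b ⟨hb, hnb⟩ hab
    exact hnb (hinj hb ha hab ▸ hna)
  obtain ⟨hU, hW, hadj, hnadj⟩ := hR.extend_spec hdisj
  rw [← greedyEmbed_eq] at hU hW hadj hnadj
  set g := hR.greedyEmbed G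
  by_cases hnm : G.Adj n m
  · have hm : g m ∈ ((range n).filter (G.Adj n)).image g :=
      mem_image_of_mem g (mem_filter.mpr ⟨mem_range.mpr hmn, hnm⟩)
    exact ⟨fun h ↦ hU (h ▸ hm), iff_of_true (hadj _ hm) hnm⟩
  · have hm : g m ∈ ((range n).filter fun k ↦ ¬ G.Adj n k).image g :=
      mem_image_of_mem g (mem_filter.mpr ⟨mem_range.mpr hmn, hnm⟩)
    exact ⟨fun h ↦ hW (h ▸ hm), iff_of_false (hnadj _ hm) hnm⟩

noncomputable def greedyEmbedding : G ↪g R where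
  toFun := hR.greedyEmbed G
  inj' := .of_lt_imp_ne fun _ _ h ↦ (hR.greedyEmbed_ne_and_adj_iff_of_lt G h).1
  map_rel_iff' {a b} := by
    rcases lt_trichotomy a b with h | rfl | h
    · rw [R.adj_comm, G.adj_comm]
      exact (hR.greedyEmbed_ne_and_adj_iff_of_lt G h).2
    · simp
    · exact (hR.greedyEmbed_ne_and_adj_iff_of_lt G h).2

end

theorem nonempty_embedding {W : Type*} [Countable W] (hR : R.HasPropR) (G : SimpleGraph W) :
    Nonempty (G ↪g R) := by
  obtain ⟨f, hf⟩ := Countable.exists_injective_nat W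
  let e : W ↪ ℕ := ⟨f, hf⟩
  exact ⟨(hR.greedyEmbedding (G.map e)).comp (Embedding.map e G)⟩

end SimpleGraph.HasPropR

theorem embeds_in_hasPropR_general {W V : Type*} [Countable W]
    (G : SimpleGraph W) (R : SimpleGraph V) (hR : R.HasPropR) :
    ∃ f : W → V, Function.Injective f ∧
      ∀ u v : W, G.Adj u v ↔ R.Adj (f u) (f v) := by
  obtain ⟨f⟩ := hR.nonempty_embedding G
  exact ⟨f, f.injective, fun _ _ ↦ f.map_adj_iff.symm⟩

/-- Every countable simple graph embeds as an induced subgraph in any countable simple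
graph with property (R). -/
theorem embeds_in_hasPropR {W V : Type*} [Countable W] [Countable V]
    (G : SimpleGraph W) (R : SimpleGraph V) (hR : R.HasPropR) :
    ∃ f : W → V, Function.Injective f ∧
      ∀ u v : W, G.Adj u v ↔ R.Adj (f u) (f v) :=
  embeds_in_hasPropR_general G R hR
end

section
/- Let Σ be a finite group and let π₁, π₂ : Σ → Aut(R) be two free and non-singular actions of Σ on a countable simple graph R with property (R). Let φ be an isomorphism between finite induced subgraphs of R whose domain d(φ) is π₁(Σ)-invariant, whose range r(φ) is π₂(Σ)-invariant, and which satisfies φ(π₁(σ)x) = π₂(σ)φ(x) for all σ ∈ Σ and x ∈ d(φ). Then there exists an automorphism φ̄ of R with φ̄(x) = φ(x) for all x ∈ d(φ) and φ̄ ∘ π₁(σ) = π₂(σ) ∘ φ̄ for all σ ∈ Σ. -/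
/-!
A back-and-forth argument. Given a finite equivariant partial isomorphism `s` and a vertex `v`
outside its domain, property (R) yields a vertex `z` whose adjacency to the range of `s` is the
image under `s` of the adjacency of `v` to its domain. Sending `π₁ σ v` to `π₂ σ z` extends `s`
equivariantly: freeness makes this well defined and injective, non-singularity makes both orbits
independent sets, and equivariance of `s` transports the adjacency pattern from `v` to each
`π₁ σ v`. The inverse of a partial isomorphism gives the backward step, and a sequence meeting
the cofinal sets `{t | x ∈ t.dom ∧ x ∈ t.cod}` for all `x` in a countable `V` has the required
automorphism as its union.
-/

namespace SimpleGraph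

variable {V S : Type*} [Group S] {R : SimpleGraph V}

theorem HasPropR.exists_adj_iff (hR : R.HasPropR) (B : Finset V) (P : V → Prop) :
    ∃ z ∉ B, ∀ y ∈ B, R.Adj z y ↔ P y := by
  classical
  obtain ⟨z, hzU, hzW, hU, hW⟩ :=
    hR (B.filter P) (B.filter (¬ P ·)) (Finset.disjoint_filter_filter_not _ _ _)
  refine ⟨z, fun hz => ?_, fun y hy => ⟨fun h => ?_, fun h => hU y (by simp [hy, h])⟩⟩
  · by_cases h : P z
    · exact hzU (by simp [hz, h])
    · exact hzW (by simp [hz, h])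
  · by_contra h'
    exact hW y (by simp [hy, h']) h

section Action

variable (π : S →* (R ≃g R))

theorem adj_apply_left_iff (σ : S) (x y : V) : R.Adj (π σ x) y ↔ R.Adj x (π σ⁻¹ y) := by
  simpa using ((π σ).map_rel_iff (a := x) (b := π σ⁻¹ y))

theorem apply_mem_iff {A : Finset V} (hA : ∀ σ, ∀ x ∈ A, π σ x ∈ A) (σ : S) (x : V) :
    π σ x ∈ A ↔ x ∈ A :=
  ⟨fun h => by simpa using hA σ⁻¹ _ h, hA σ x⟩

theorem apply_injective_of_free (hfree : ∀ σ : S, ∀ x : V, π σ x = x → σ = 1) (v : V) :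
    Function.Injective (π · v) := by
  intro σ τ h
  have : π (τ⁻¹ * σ) v = v := by simp only at h; simp [h]
  exact (inv_mul_eq_one.mp (hfree _ _ this)).symm

theorem not_adj_apply_apply (hns : ∀ (σ : S) (u : V), ¬ R.Adj (π σ u) u) (σ τ : S) (v : V) :
    ¬ R.Adj (π σ v) (π τ v) := by
  rw [adj_apply_left_iff, ← R.adj_comm, ← RelIso.mul_apply, ← map_mul]
  exact hns _ v

variable [Fintype S] [DecidableEq V]

def orbit (v : V) : Finset V := Finset.univ.image (π · v)

theorem coe_orbit (v : V) : (orbit π v : Set V) = Set.range (π · v) := by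
  simp [orbit]

theorem forall_mem_orbit {P : V → Prop} {v : V} : (∀ x ∈ orbit π v, P x) ↔ ∀ σ, P (π σ v) := by
  simp [orbit]

theorem mem_orbit_self (v : V) : v ∈ orbit π v := by
  simpa [orbit] using ⟨1, by simp⟩

theorem apply_mem_orbit (σ : S) {v x : V} (hx : x ∈ orbit π v) : π σ x ∈ orbit π v := by
  obtain ⟨τ, -, rfl⟩ := Finset.mem_image.mp hx
  exact Finset.mem_image.mpr ⟨σ * τ, Finset.mem_univ _, by simp⟩

end Action

theorem bijOn_orbit [Fintype S] [DecidableEq V] {π₁ π₂ : S →* (R ≃g R)}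
    (hfree₂ : ∀ σ : S, ∀ x : V, π₂ σ x = x → σ = 1) {g : V → V} {v z : V}
    (hg : ∀ σ, g (π₁ σ v) = π₂ σ z) : Set.BijOn g (orbit π₁ v) (orbit π₂ z) := by
  rw [coe_orbit, coe_orbit]
  refine ⟨?_, ?_, ?_⟩
  · rintro _ ⟨σ, rfl⟩
    exact ⟨σ, (hg σ).symm⟩
  · rintro _ ⟨σ, rfl⟩ _ ⟨τ, rfl⟩ h
    rw [hg, hg] at h
    rw [apply_injective_of_free π₂ hfree₂ z h]
  · rintro _ ⟨σ, rfl⟩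
    exact ⟨_, ⟨σ, rfl⟩, hg σ⟩

structure EquivariantPartialIso (R : SimpleGraph V) (π₁ π₂ : S →* (R ≃g R)) where
  dom : Finset V
  cod : Finset V
  toFun : V → V
  bijOn : Set.BijOn toFun dom cod
  adj_iff : ∀ u ∈ dom, ∀ v ∈ dom, R.Adj u v ↔ R.Adj (toFun u) (toFun v)
  apply_mem_dom : ∀ σ : S, ∀ x ∈ dom, π₁ σ x ∈ dom
  apply_mem_cod : ∀ σ : S, ∀ y ∈ cod, π₂ σ y ∈ cod
  map_apply : ∀ σ : S, ∀ x ∈ dom, toFun (π₁ σ x) = π₂ σ (toFun x)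

namespace EquivariantPartialIso

variable {π₁ π₂ : S →* (R ≃g R)}

instance : Preorder (EquivariantPartialIso R π₁ π₂) where
  le s t := s.dom ⊆ t.dom ∧ ∀ x ∈ s.dom, t.toFun x = s.toFun x
  le_refl _ := ⟨subset_rfl, fun _ _ => rfl⟩
  le_trans _ _ _ hst htu :=
    ⟨hst.1.trans htu.1, fun x hx => (htu.2 x (hst.1 hx)).trans (hst.2 x hx)⟩

variable {s t : EquivariantPartialIso R π₁ π₂}

theorem dom_subset_of_le (h : s ≤ t) : s.dom ⊆ t.dom := h.1

theorem toFun_eq_of_le (h : s ≤ t) {x : V} (hx : x ∈ s.dom) : t.toFun x = s.toFun x := h.2 x hx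

theorem cod_subset_of_le (h : s ≤ t) : s.cod ⊆ t.cod := by
  intro y hy
  obtain ⟨x, hx, rfl⟩ := s.bijOn.surjOn hy
  rw [← toFun_eq_of_le h hx]
  exact t.bijOn.mapsTo (dom_subset_of_le h hx)

section Symm

variable [Nonempty V]

noncomputable def symm (s : EquivariantPartialIso R π₁ π₂) : EquivariantPartialIso R π₂ π₁ where
  dom := s.cod
  cod := s.dom
  toFun := Function.invFunOn s.toFun s.dom
  bijOn := s.bijOn.symm s.bijOn.invOn_invFunOn.symm
  adj_iff := by
    intro y hy y' hy'
    obtain ⟨x, hx, rfl⟩ := s.bijOn.surjOn hy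
    obtain ⟨x', hx', rfl⟩ := s.bijOn.surjOn hy'
    rw [s.bijOn.injOn.leftInvOn_invFunOn hx, s.bijOn.injOn.leftInvOn_invFunOn hx']
    exact (s.adj_iff x hx x' hx').symm
  apply_mem_dom := s.apply_mem_cod
  apply_mem_cod := s.apply_mem_dom
  map_apply := by
    intro σ y hy
    obtain ⟨x, hx, rfl⟩ := s.bijOn.surjOn hy
    rw [← s.map_apply σ x hx, s.bijOn.injOn.leftInvOn_invFunOn hx,
      s.bijOn.injOn.leftInvOn_invFunOn (s.apply_mem_dom σ x hx)]

theorem symm_toFun_apply {x : V} (hx : x ∈ s.dom) : s.symm.toFun (s.toFun x) = x :=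
  s.bijOn.injOn.leftInvOn_invFunOn hx

theorem le_symm_of_symm_le {t : EquivariantPartialIso R π₂ π₁} (h : s.symm ≤ t) : s ≤ t.symm := by
  refine ⟨cod_subset_of_le h, fun x hx => ?_⟩
  have hfx : s.toFun x ∈ t.dom := dom_subset_of_le h (s.bijOn.mapsTo hx)
  calc t.symm.toFun x = t.symm.toFun (t.toFun (s.toFun x)) := by
        rw [toFun_eq_of_le h (s.bijOn.mapsTo hx), symm_toFun_apply hx]
    _ = s.toFun x := symm_toFun_apply hfx

end Symm

theorem adj_apply_iff_adj_apply {v z : V}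
    (hadj : ∀ u ∈ s.dom, R.Adj z (s.toFun u) ↔ R.Adj v u) (σ : S) {u : V} (hu : u ∈ s.dom) :
    R.Adj (π₁ σ v) u ↔ R.Adj (π₂ σ z) (s.toFun u) := by
  rw [adj_apply_left_iff, adj_apply_left_iff, ← s.map_apply σ⁻¹ u hu,
    hadj _ (s.apply_mem_dom σ⁻¹ u hu)]

section Extension

variable [Finite S]

theorem exists_le_mem_dom_of_adj_iff
    (hfree₁ : ∀ σ : S, ∀ x : V, π₁ σ x = x → σ = 1)
    (hfree₂ : ∀ σ : S, ∀ x : V, π₂ σ x = x → σ = 1)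
    (hns₁ : ∀ (σ : S) (u : V), ¬ R.Adj (π₁ σ u) u)
    (hns₂ : ∀ (σ : S) (u : V), ¬ R.Adj (π₂ σ u) u)
    (s : EquivariantPartialIso R π₁ π₂) {v z : V} (hv : v ∉ s.dom) (hz : z ∉ s.cod)
    (hadj : ∀ u ∈ s.dom, R.Adj z (s.toFun u) ↔ R.Adj v u) :
    ∃ t, s ≤ t ∧ v ∈ t.dom := by
  classical
  have := Fintype.ofFinite S
  set g := Function.extend (π₁ · v) (π₂ · z) s.toFun
  have hv' : ∀ σ, π₁ σ v ∉ s.dom := fun σ => (apply_mem_iff π₁ s.apply_mem_dom σ v).not.mpr hv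
  have hz' : ∀ σ, π₂ σ z ∉ s.cod := fun σ => (apply_mem_iff π₂ s.apply_mem_cod σ z).not.mpr hz
  have hg_orbit : ∀ σ, g (π₁ σ v) = π₂ σ z :=
    (apply_injective_of_free π₁ hfree₁ v).extend_apply _ _
  have hg_dom : ∀ x ∈ s.dom, g x = s.toFun x := fun x hx =>
    Function.extend_apply' _ _ _ (by rintro ⟨σ, rfl⟩; exact hv' σ hx)
  have hbij_dom : Set.BijOn g s.dom s.cod := s.bijOn.congr fun x hx => (hg_dom x hx).symm
  have hbij_orbit : Set.BijOn g (orbit π₁ v) (orbit π₂ z) := bijOn_orbit hfree₂ hg_orbit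
  have hdisj : Disjoint s.dom (orbit π₁ v) :=
    Finset.disjoint_right.mpr ((forall_mem_orbit π₁).mpr hv')
  refine ⟨⟨s.dom ∪ orbit π₁ v, s.cod ∪ orbit π₂ z, g, ?_, ?_, ?_, ?_, ?_⟩,
    ⟨Finset.subset_union_left, hg_dom⟩, Finset.mem_union_right _ (mem_orbit_self π₁ v)⟩
  · rw [Finset.coe_union, Finset.coe_union]
    refine hbij_dom.union hbij_orbit ((Set.injOn_union (Finset.disjoint_coe.mpr hdisj)).mpr
      ⟨hbij_dom.injOn, hbij_orbit.injOn, ?_⟩)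
    rw [coe_orbit]
    rintro x hx _ ⟨σ, rfl⟩ h
    rw [hg_dom x hx, hg_orbit] at h
    exact hz' σ (h ▸ s.bijOn.mapsTo hx)
  · simp only [Finset.forall_mem_union, forall_mem_orbit]
    refine ⟨fun u hu => ⟨fun u' hu' => ?_, fun τ => ?_⟩, fun σ => ⟨fun u' hu' => ?_, fun τ => ?_⟩⟩
    · rw [hg_dom u hu, hg_dom u' hu']
      exact s.adj_iff u hu u' hu'
    · rw [hg_dom u hu, hg_orbit, R.adj_comm, R.adj_comm (s.toFun u)]
      exact adj_apply_iff_adj_apply hadj τ hu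
    · rw [hg_dom u' hu', hg_orbit]
      exact adj_apply_iff_adj_apply hadj σ hu'
    · rw [hg_orbit, hg_orbit]
      exact iff_of_false (not_adj_apply_apply π₁ hns₁ σ τ v) (not_adj_apply_apply π₂ hns₂ σ τ z)
  · intro σ x hx
    simp only [Finset.mem_union] at hx ⊢
    exact hx.imp (s.apply_mem_dom σ x) (apply_mem_orbit π₁ σ)
  · intro σ y hy
    simp only [Finset.mem_union] at hy ⊢
    exact hy.imp (s.apply_mem_cod σ y) (apply_mem_orbit π₂ σ)
  · intro σ
    simp only [Finset.forall_mem_union, forall_mem_orbit]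
    refine ⟨fun x hx => ?_, fun τ => ?_⟩
    · rw [hg_dom _ (s.apply_mem_dom σ x hx), hg_dom x hx, s.map_apply σ x hx]
    · rw [← RelIso.mul_apply, ← map_mul, hg_orbit, hg_orbit, map_mul, RelIso.mul_apply]

theorem exists_le_mem_dom (hR : R.HasPropR)
    (hfree₁ : ∀ σ : S, ∀ x : V, π₁ σ x = x → σ = 1)
    (hfree₂ : ∀ σ : S, ∀ x : V, π₂ σ x = x → σ = 1)
    (hns₁ : ∀ (σ : S) (u : V), ¬ R.Adj (π₁ σ u) u)
    (hns₂ : ∀ (σ : S) (u : V), ¬ R.Adj (π₂ σ u) u)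
    (s : EquivariantPartialIso R π₁ π₂) (v : V) : ∃ t, s ≤ t ∧ v ∈ t.dom := by
  by_cases hv : v ∈ s.dom
  · exact ⟨s, le_rfl, hv⟩
  obtain ⟨z, hz, hadj⟩ := hR.exists_adj_iff s.cod fun y => ∃ u ∈ s.dom, s.toFun u = y ∧ R.Adj v u
  refine exists_le_mem_dom_of_adj_iff hfree₁ hfree₂ hns₁ hns₂ s hv hz fun u hu => ?_
  rw [hadj _ (s.bijOn.mapsTo hu)]
  exact ⟨fun ⟨u', hu', hfu, h⟩ => s.bijOn.injOn hu' hu hfu ▸ h, fun h => ⟨u, hu, rfl, h⟩⟩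

theorem exists_le_mem_cod (hR : R.HasPropR)
    (hfree₁ : ∀ σ : S, ∀ x : V, π₁ σ x = x → σ = 1)
    (hfree₂ : ∀ σ : S, ∀ x : V, π₂ σ x = x → σ = 1)
    (hns₁ : ∀ (σ : S) (u : V), ¬ R.Adj (π₁ σ u) u)
    (hns₂ : ∀ (σ : S) (u : V), ¬ R.Adj (π₂ σ u) u)
    (s : EquivariantPartialIso R π₁ π₂) (w : V) : ∃ t, s ≤ t ∧ w ∈ t.cod := by
  have : Nonempty V := ⟨w⟩
  obtain ⟨t, hst, hw⟩ := exists_le_mem_dom hR hfree₂ hfree₁ hns₂ hns₁ s.symm w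
  exact ⟨t.symm, le_symm_of_symm_le hst, hw⟩

theorem isCofinal_mem_dom_mem_cod (hR : R.HasPropR)
    (hfree₁ : ∀ σ : S, ∀ x : V, π₁ σ x = x → σ = 1)
    (hfree₂ : ∀ σ : S, ∀ x : V, π₂ σ x = x → σ = 1)
    (hns₁ : ∀ (σ : S) (u : V), ¬ R.Adj (π₁ σ u) u)
    (hns₂ : ∀ (σ : S) (u : V), ¬ R.Adj (π₂ σ u) u) (x : V) :
    IsCofinal {t : EquivariantPartialIso R π₁ π₂ | x ∈ t.dom ∧ x ∈ t.cod} := by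
  intro s
  obtain ⟨t, hst, hx⟩ := exists_le_mem_dom hR hfree₁ hfree₂ hns₁ hns₂ s x
  obtain ⟨u, htu, hx'⟩ := exists_le_mem_cod hR hfree₁ hfree₂ hns₁ hns₂ t x
  exact ⟨u, ⟨dom_subset_of_le htu hx, hx'⟩, hst.trans htu⟩

end Extension

section Limit

variable {c : ℕ → EquivariantPartialIso R π₁ π₂} (hc : Monotone c)
include hc

theorem toFun_eq_of_monotone {m n : ℕ} {x : V} (hm : x ∈ (c m).dom) (hn : x ∈ (c n).dom) :
    (c m).toFun x = (c n).toFun x := by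
  rcases le_total m n with h | h
  · exact (toFun_eq_of_le (hc h) hm).symm
  · exact toFun_eq_of_le (hc h) hn

theorem exists_mem_dom_mem_dom (hdom : ∀ x, ∃ n, x ∈ (c n).dom) (x y : V) :
    ∃ n, x ∈ (c n).dom ∧ y ∈ (c n).dom := by
  obtain ⟨m, hm⟩ := hdom x
  obtain ⟨n, hn⟩ := hdom y
  exact ⟨max m n, dom_subset_of_le (hc (le_max_left m n)) hm,
    dom_subset_of_le (hc (le_max_right m n)) hn⟩

theorem exists_iso_of_monotone (hdom : ∀ x, ∃ n, x ∈ (c n).dom) (hcod : ∀ y, ∃ n, y ∈ (c n).cod) :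
    ∃ ψ : R ≃g R, (∀ n, ∀ x ∈ (c n).dom, ψ x = (c n).toFun x) ∧
      ∀ (σ : S) (x : V), ψ (π₁ σ x) = π₂ σ (ψ x) := by
  let ψ : V → V := fun x => (c (hdom x).choose).toFun x
  have hψ : ∀ n, ∀ x ∈ (c n).dom, ψ x = (c n).toFun x := fun n x hx =>
    toFun_eq_of_monotone hc (hdom x).choose_spec hx
  have hψ_bij : Function.Bijective ψ := by
    refine ⟨fun x y hxy => ?_, fun y => ?_⟩
    · obtain ⟨n, hx, hy⟩ := exists_mem_dom_mem_dom hc hdom x y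
      exact (c n).bijOn.injOn hx hy (by rwa [← hψ n x hx, ← hψ n y hy])
    · obtain ⟨n, hy⟩ := hcod y
      obtain ⟨x, hx, rfl⟩ := (c n).bijOn.surjOn hy
      exact ⟨x, hψ n x hx⟩
  refine ⟨⟨Equiv.ofBijective ψ hψ_bij, fun {x y} => ?_⟩, hψ, fun σ x => ?_⟩
  · obtain ⟨n, hx, hy⟩ := exists_mem_dom_mem_dom hc hdom x y
    simp only [Equiv.ofBijective_apply, hψ n x hx, hψ n y hy]
    exact ((c n).adj_iff x hx y hy).symm
  · obtain ⟨n, hx⟩ := hdom x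
    simp only [RelIso.coe_fn_mk, Equiv.ofBijective_apply]
    rw [hψ n _ ((c n).apply_mem_dom σ x hx), hψ n x hx, (c n).map_apply σ x hx]

end Limit

end EquivariantPartialIso

end SimpleGraph

open SimpleGraph EquivariantPartialIso in
/-- Equivariant extension of partial isomorphisms: given two free and non-singular actions
`π₁, π₂` of a finite group `S` on a countable graph `R` with property (R), any
`S`-equivariant isomorphism between finite induced subgraphs with `π₁(S)`-invariant domain
and `π₂(S)`-invariant range extends to an `S`-equivariant automorphism of `R`. -/
theorem equivariant_extension {V : Type*} [Countable V]
    (R : SimpleGraph V) (hR : R.HasPropR)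
    (S : Type*) [Group S] [Finite S]
    (π₁ π₂ : S →* (R ≃g R))
    (hfree₁ : ∀ σ : S, ∀ x : V, π₁ σ x = x → σ = 1)
    (hfree₂ : ∀ σ : S, ∀ x : V, π₂ σ x = x → σ = 1)
    (hns₁ : ∀ (σ : S) (u : V), ¬ R.Adj (π₁ σ u) u)
    (hns₂ : ∀ (σ : S) (u : V), ¬ R.Adj (π₂ σ u) u)
    (A B : Finset V) (φ : V → V)
    (hbij : Set.BijOn φ (↑A : Set V) (↑B : Set V))
    (hiso : ∀ u ∈ A, ∀ v ∈ A, R.Adj u v ↔ R.Adj (φ u) (φ v))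
    (hinvA : ∀ (σ : S), ∀ x ∈ A, π₁ σ x ∈ A)
    (hinvB : ∀ (σ : S), ∀ y ∈ B, π₂ σ y ∈ B)
    (hequi : ∀ (σ : S), ∀ x ∈ A, φ (π₁ σ x) = π₂ σ (φ x)) :
    ∃ ψ : R ≃g R, (∀ x ∈ A, ψ x = φ x) ∧
      ∀ (σ : S) (x : V), ψ (π₁ σ x) = π₂ σ (ψ x) := by
  have := Encodable.ofCountable V
  let s₀ : EquivariantPartialIso R π₁ π₂ := ⟨A, B, φ, hbij, hiso, hinvA, hinvB, hequi⟩
  let 𝒟 : V → Order.Cofinal (EquivariantPartialIso R π₁ π₂) := fun x =>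
    ⟨_, isCofinal_mem_dom_mem_cod hR hfree₁ hfree₂ hns₁ hns₂ x⟩
  obtain ⟨ψ, hψ, hψ_equiv⟩ := exists_iso_of_monotone (Order.sequenceOfCofinals.monotone s₀ 𝒟)
    (fun x => ⟨_, (Order.sequenceOfCofinals.encode_mem s₀ 𝒟 x).1⟩)
    (fun y => ⟨_, (Order.sequenceOfCofinals.encode_mem s₀ 𝒟 y).2⟩)
  exact ⟨ψ, hψ 0, hψ_equiv⟩
end

section
/- Every homogeneous action of a group Γ by automorphisms on a countable simple graph R with property (R) disconnects the finite sets. -/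
/-- An action of `Γ` on a graph `G` is homogeneous if every isomorphism between finite
induced subgraphs is realised by a group element. -/
def IsHomogeneousAction {Γ : Type*} [Group Γ] {V : Type*} (G : SimpleGraph V)
    (ρ : Γ →* (G ≃g G)) : Prop :=
  ∀ (A : Finset V) (φ : V → V), Set.InjOn φ (↑A : Set V) →
    (∀ u ∈ A, ∀ v ∈ A, G.Adj u v ↔ G.Adj (φ u) (φ v)) →
    ∃ g : Γ, ∀ u ∈ A, ρ g u = φ u

/-- An action of `Γ` on a graph `G` disconnects the finite sets if every finite set of
vertices can be moved off itself with no edges between the set and its translate. -/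
def DisconnectsFinsets {Γ : Type*} [Group Γ] {V : Type*} (G : SimpleGraph V)
    (ρ : Γ →* (G ≃g G)) : Prop :=
  ∀ F : Finset V, ∃ g : Γ, (∀ u ∈ F, ρ g u ∉ F) ∧
    ∀ u ∈ F, ∀ v ∈ F, ¬ G.Adj (ρ g u) v

/-!
Using property (R) one vertex at a time, a finite set `F` can be copied, as an induced
subgraph, onto vertices outside `F` that have no neighbours in `F`: each new vertex is chosen
with the prescribed adjacencies to the copy built so far and no adjacencies to `F`.
Homogeneity then yields a group element realising this copy.
-/

open Finset Function

theorem Set.injOn_update_insert {α β : Type*} [DecidableEq α] [DecidableEq β] {s : Finset α}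
    {a : α} {b : β} {f : α → β} (ha : a ∉ s) (hf : Set.InjOn f s) (hb : b ∉ s.image f) :
    Set.InjOn (update f a b) (insert a s : Finset α) := by
  have hEq : Set.EqOn f (update f a b) s := fun u hu =>
    (update_of_ne (ne_of_mem_of_not_mem (mem_coe.1 hu) ha) _ _).symm
  rw [coe_insert, Set.injOn_insert (by simpa using ha), ← hEq.image_eq, update_self]
  exact ⟨hf.congr hEq, by simpa using hb⟩

namespace SimpleGraph

variable {V : Type*} {G : SimpleGraph V}

theorem HasPropR.exists_adj_iff_s7 (hG : G.HasPropR) (S : Finset V) (P : V → Prop)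
    [DecidablePred P] : ∃ z ∉ S, ∀ s ∈ S, G.Adj z s ↔ P s := by
  obtain ⟨z, hzU, hzW, hU, hW⟩ :=
    hG (S.filter P) (S.filter (¬ P ·)) (disjoint_filter_filter_not _ _ _)
  refine ⟨z, fun hz => ?_, fun s hs => ⟨fun h => ?_, fun h => hU s (by simp [hs, h])⟩⟩
  · by_cases h : P z
    · exact hzU (by simp [hz, h])
    · exact hzW (by simp [hz, h])
  · by_contra h'
    exact hW s (by simp [hs, h']) h

theorem adj_iff_update_insert [DecidableEq V] {A : Finset V} {a z : V} {φ : V → V} (ha : a ∉ A)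
    (hφ : ∀ u ∈ A, ∀ v ∈ A, G.Adj u v ↔ G.Adj (φ u) (φ v))
    (hz : ∀ u ∈ A, G.Adj a u ↔ G.Adj z (φ u)) :
    ∀ u ∈ insert a A, ∀ v ∈ insert a A,
      G.Adj u v ↔ G.Adj (update φ a z u) (update φ a z v) := by
  intro u hu v hv
  rcases mem_insert.1 hu with rfl | huA <;> rcases mem_insert.1 hv with rfl | hvA
  · simp
  · rw [update_self, update_of_ne (ne_of_mem_of_not_mem hvA ha)]
    exact hz v hvA
  · rw [update_self, update_of_ne (ne_of_mem_of_not_mem huA ha), G.adj_comm, G.adj_comm (φ u)]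
    exact hz u huA
  · rw [update_of_ne (ne_of_mem_of_not_mem huA ha), update_of_ne (ne_of_mem_of_not_mem hvA ha)]
    exact hφ u huA v hvA

theorem HasPropR.exists_copy_away_from (hG : G.HasPropR) (F A : Finset V) :
    ∃ φ : V → V, Set.InjOn φ A ∧
      (∀ u ∈ A, ∀ v ∈ A, G.Adj u v ↔ G.Adj (φ u) (φ v)) ∧
      ∀ u ∈ A, φ u ∉ F ∧ ∀ v ∈ F, ¬ G.Adj (φ u) v := by
  classical
  induction A using Finset.induction_on with
  | empty => exact ⟨id, by simp, by simp, by simp⟩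
  | @insert a A ha ih =>
    obtain ⟨φ, hinj, hadj, haway⟩ := ih
    obtain ⟨z, hzS, hz⟩ :=
      hG.exists_adj_iff_s7 (F ∪ A.image φ) (· ∈ (A.filter (G.Adj a)).image φ)
    have hzF : z ∉ F := fun h => hzS (mem_union_left _ h)
    have hzA : z ∉ A.image φ := fun h => hzS (mem_union_right _ h)
    have hzF_adj : ∀ v ∈ F, ¬ G.Adj z v := by
      intro v hv h
      obtain ⟨u, hu, rfl⟩ := mem_image.1 ((hz v (mem_union_left _ hv)).1 h)
      exact (haway u (mem_filter.1 hu).1).1 hv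
    have hzA_adj : ∀ u ∈ A, G.Adj a u ↔ G.Adj z (φ u) := by
      intro u hu
      rw [hz _ (mem_union_right _ (mem_image_of_mem φ hu)), mem_image]
      constructor
      · exact fun h => ⟨u, mem_filter.2 ⟨hu, h⟩, rfl⟩
      · rintro ⟨w, hw, hwu⟩
        rw [mem_filter] at hw
        exact hinj hw.1 hu hwu ▸ hw.2
    refine ⟨update φ a z, Set.injOn_update_insert ha hinj hzA,
      adj_iff_update_insert ha hadj hzA_adj, fun u hu => ?_⟩
    rcases mem_insert.1 hu with rfl | huA
    · rw [update_self]
      exact ⟨hzF, hzF_adj⟩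
    · rw [update_of_ne (ne_of_mem_of_not_mem huA ha)]
      exact haway u huA

end SimpleGraph

theorem homogeneous_disconnects_general {Γ : Type*} [Group Γ] {V : Type*}
    (R : SimpleGraph V) (hR : R.HasPropR) (ρ : Γ →* (R ≃g R))
    (hhom : IsHomogeneousAction R ρ) :
    DisconnectsFinsets R ρ := by
  intro F
  obtain ⟨φ, hinj, hadj, haway⟩ := hR.exists_copy_away_from F F
  obtain ⟨g, hg⟩ := hhom F φ hinj hadj
  exact ⟨g, fun u hu => hg u hu ▸ (haway u hu).1, fun u hu => hg u hu ▸ (haway u hu).2⟩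

/-- Every homogeneous action on a countable graph with property (R) disconnects the
finite sets. -/
theorem homogeneous_disconnects {Γ : Type*} [Group Γ] {V : Type*} [Countable V]
    (R : SimpleGraph V) (hR : R.HasPropR) (ρ : Γ →* (R ≃g R))
    (hhom : IsHomogeneousAction R ρ) :
    DisconnectsFinsets R ρ :=
  homogeneous_disconnects_general R hR ρ hhom
end

section
/- Let Σ be a finite subgroup of an infinite countable group Γ and let R be a countable simple graph with property (R). There exists a non-singular action of Γ by automorphisms on R with property (F) such that: the restricted action of Σ on R is free; for every infinite subgroup H ≤ Γ the restricted action of H on R disconnects the finite sets; and for every pair of subgroups Σ' ≤ H' ≤ Γ such that Σ' is a highly core-free subgroup of H', the subgroup Σ' is highly core-free with respect to the restricted action H'↷R. -/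
/-- The action is non-singular: no vertex is adjacent to one of its translates. -/
def NonSingularAction {Γ : Type*} [Group Γ] {V : Type*} (G : SimpleGraph V)
    (ρ : Γ →* (G ≃g G)) : Prop :=
  ∀ (g : Γ) (u : V), ¬ G.Adj (ρ g u) u

/-- Property (F): for all finite `S ⊆ Γ \ {1}` and finite `F ⊆ V` there is a vertex
outside `F`, not adjacent to any vertex of `F`, moved by every element of `S`. -/
def PropertyF {Γ : Type*} [Group Γ] {V : Type*} (G : SimpleGraph V)
    (ρ : Γ →* (G ≃g G)) : Prop :=
  ∀ (S : Finset Γ) (F : Finset V), (1 : Γ) ∉ S →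
    ∃ x : V, x ∉ F ∧ (∀ u ∈ F, ¬ G.Adj x u) ∧ ∀ g ∈ S, ρ g x ≠ x

/-- A subgroup `S` of a group `G` is highly core-free if for every finite subset `F` of
`G` there exists `g` with `gF ∩ SF = ∅` and `Sgu ∩ Sgv = ∅` for all distinct `u, v ∈ F`. -/
def Subgroup.HighlyCoreFree {G : Type*} [Group G] (S : Subgroup G) : Prop :=
  ∀ F : Finset G, ∃ g : G,
    (∀ u ∈ F, ∀ v ∈ F, ∀ σ ∈ S, g * u ≠ σ * v) ∧
    (∀ u ∈ F, ∀ v ∈ F, u ≠ v → ∀ σ ∈ S, ∀ τ ∈ S, σ * (g * u) ≠ τ * (g * v))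

/-- A subgroup `S ≤ H ≤ Γ` is highly core-free with respect to the action of `H` on a
graph `G` obtained by restricting an action of `Γ`. -/
def HighlyCoreFreeWrt {Γ : Type*} [Group Γ] {V : Type*} (G : SimpleGraph V)
    (ρ : Γ →* (G ≃g G)) (S H : Subgroup Γ) : Prop :=
  ∀ F : Finset V, ∃ g ∈ H,
    (∀ u ∈ F, ∀ v ∈ F, ∀ σ ∈ S, ρ g u ≠ ρ σ v) ∧
    (∀ u ∈ F, ∀ v ∈ F, ¬ G.Adj (ρ g u) v) ∧
    (∀ u ∈ F, ∀ v ∈ F, u ≠ v → ∀ σ ∈ S, ∀ τ ∈ S, ρ σ (ρ g u) ≠ ρ τ (ρ g v)) ∧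
    (∀ u ∈ F, ∀ v ∈ F, ∀ σ ∈ S, σ ≠ 1 → ¬ G.Adj (ρ σ (ρ g u)) (ρ g v))

/-!
Build one model and transport it. On `Γ × ℕ`, join `(y, n)` to the lower-level vertices
`(y * x, m)` with `(x, m) ∈ e n`, where `e` lists every finite subset of `Γ × ℕ` at arbitrarily
high levels. Left multiplication in the first coordinate preserves this graph and acts freely,
and no vertex is adjacent to a translate of itself, as both lie on the same level. A vertex `(1, N)`
on a level `N` with `e N = U` above all of `U ∪ W` witnesses property (R) for `U` and `W`;
with `U = ∅` and freeness this gives property (F).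

Between finitely many levels only finitely many displacements `x⁻¹ * y` carry edges, so an
element of `H'` separating a suitable finite subset of `Γ` in the sense of high core-freeness
also witnesses high core-freeness for finite sets of vertices; disconnecting finite sets is
the case `Σ' = ⊥`, which is highly core-free in every infinite group.

By back and forth this graph is isomorphic to `R`; conjugating by the isomorphism moves the
action to `R`.
-/

namespace SimpleGraph

variable {A B : Type*} (G₁ : SimpleGraph A) (G₂ : SimpleGraph B)

def PairsCompatible (p q : A × B) : Prop :=
  (p.1 = q.1 ↔ p.2 = q.2) ∧ (G₁.Adj p.1 q.1 ↔ G₂.Adj p.2 q.2)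

def FinitePartialIso : Type _ :=
  {f : Finset (A × B) // ∀ p ∈ f, ∀ q ∈ f, G₁.PairsCompatible G₂ p q}

instance : PartialOrder (G₁.FinitePartialIso G₂) := Subtype.partialOrder _

variable {G₁ G₂}

lemma PairsCompatible.symm {p q : A × B} (h : G₁.PairsCompatible G₂ p q) :
    G₁.PairsCompatible G₂ q p :=
  ⟨by rw [eq_comm, h.1, eq_comm], by rw [G₁.adj_comm, h.2, G₂.adj_comm]⟩

lemma pairsCompatible_self (p : A × B) : G₁.PairsCompatible G₂ p p :=
  ⟨iff_of_true rfl rfl, iff_of_false (G₁.irrefl) (G₂.irrefl)⟩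

lemma pairsCompatible_swap {p q : A × B} :
    G₂.PairsCompatible G₁ p.swap q.swap ↔ G₁.PairsCompatible G₂ p q := by
  simp only [PairsCompatible, Prod.fst_swap, Prod.snd_swap, Iff.comm]

lemma HasPropR.exists_pairsCompatible (h₂ : G₂.HasPropR) {f : Finset (A × B)}
    (hf : ∀ p ∈ f, ∀ q ∈ f, G₁.PairsCompatible G₂ p q) (a : A) :
    ∃ b, ∀ p ∈ f, G₁.PairsCompatible G₂ p (a, b) := by
  classical
  by_cases hdom : ∃ p ∈ f, p.1 = a
  · obtain ⟨p, hp, rfl⟩ := hdom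
    exact ⟨p.2, fun q hq => hf q hq p hp⟩
  push Not at hdom
  let U := (f.filter fun p => G₁.Adj a p.1).image Prod.snd
  let W := (f.filter fun p => ¬ G₁.Adj a p.1).image Prod.snd
  have hUW : Disjoint U W := by
    simp only [U, W, Finset.disjoint_left, Finset.mem_image, Finset.mem_filter]
    rintro _ ⟨p, ⟨hp, hpa⟩, rfl⟩ ⟨q, ⟨hq, hqa⟩, hqp⟩
    exact hqa ((hf p hp q hq).1.mpr hqp.symm ▸ hpa)
  have hmemU : ∀ p ∈ f, G₁.Adj a p.1 → p.2 ∈ U := fun p hp hpa =>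
    Finset.mem_image_of_mem _ (Finset.mem_filter.mpr ⟨hp, hpa⟩)
  have hmemW : ∀ p ∈ f, ¬ G₁.Adj a p.1 → p.2 ∈ W := fun p hp hpa =>
    Finset.mem_image_of_mem _ (Finset.mem_filter.mpr ⟨hp, hpa⟩)
  obtain ⟨b, hbU, hbW, hadj, hnadj⟩ := h₂ U W hUW
  refine ⟨b, fun p hp => ⟨iff_of_false (hdom p hp) ?_, ?_⟩⟩
  · rintro rfl
    by_cases hpa : G₁.Adj a p.1
    exacts [hbU (hmemU p hp hpa), hbW (hmemW p hp hpa)]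
  · rw [G₁.adj_comm, G₂.adj_comm]
    by_cases hpa : G₁.Adj a p.1
    exacts [iff_of_true hpa (hadj _ (hmemU p hp hpa)), iff_of_false hpa (hnadj _ (hmemW p hp hpa))]

lemma HasPropR.exists_pairsCompatible_left (h₁ : G₁.HasPropR) {f : Finset (A × B)}
    (hf : ∀ p ∈ f, ∀ q ∈ f, G₁.PairsCompatible G₂ p q) (b : B) :
    ∃ a, ∀ p ∈ f, G₁.PairsCompatible G₂ p (a, b) := by
  classical
  have hf' : ∀ p ∈ f.image Prod.swap, ∀ q ∈ f.image Prod.swap, G₂.PairsCompatible G₁ p q := by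
    simp only [Finset.forall_mem_image, pairsCompatible_swap]
    exact hf
  obtain ⟨a, ha⟩ := h₁.exists_pairsCompatible hf' b
  exact ⟨a, fun p hp => pairsCompatible_swap.mp (ha p.swap (Finset.mem_image_of_mem _ hp))⟩

namespace FinitePartialIso

variable [DecidableEq A] [DecidableEq B]

def insert (f : G₁.FinitePartialIso G₂) (p : A × B) (hp : ∀ q ∈ f.1, G₁.PairsCompatible G₂ q p) :
    G₁.FinitePartialIso G₂ :=
  ⟨Insert.insert p f.1, by
    simp only [Finset.mem_insert]
    rintro _ (rfl | hq) _ (rfl | hr)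
    exacts [pairsCompatible_self _, (hp _ hr).symm, hp _ hq, f.2 _ hq _ hr]⟩

lemma le_insert (f : G₁.FinitePartialIso G₂) (p : A × B)
    (hp : ∀ q ∈ f.1, G₁.PairsCompatible G₂ q p) : f ≤ f.insert p hp :=
  Finset.subset_insert p f.1

def definedAt (h₁ : G₁.HasPropR) (h₂ : G₂.HasPropR) : A ⊕ B → Order.Cofinal (G₁.FinitePartialIso G₂)
  | .inl a =>
    { carrier := {f | ∃ b, (a, b) ∈ f.1}
      isCofinal f := by
        obtain ⟨b, hb⟩ := h₂.exists_pairsCompatible f.2 a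
        exact ⟨f.insert (a, b) hb, ⟨b, Finset.mem_insert_self _ _⟩, f.le_insert _ hb⟩ }
  | .inr b =>
    { carrier := {f | ∃ a, (a, b) ∈ f.1}
      isCofinal f := by
        obtain ⟨a, ha⟩ := h₁.exists_pairsCompatible_left f.2 b
        exact ⟨f.insert (a, b) ha, ⟨a, Finset.mem_insert_self _ _⟩, f.le_insert _ ha⟩ }

end FinitePartialIso

lemma nonempty_iso_of_pairsCompatible {M : Set (A × B)}
    (hM : ∀ p ∈ M, ∀ q ∈ M, G₁.PairsCompatible G₂ p q)
    (hA : ∀ a, ∃ b, (a, b) ∈ M) (hB : ∀ b, ∃ a, (a, b) ∈ M) : Nonempty (G₁ ≃g G₂) := by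
  choose φ hφ using hA
  choose ψ hψ using hB
  exact ⟨{ toFun := φ
           invFun := ψ
           left_inv := fun a => ((hM _ (hψ (φ a)) _ (hφ a)).1.mpr rfl)
           right_inv := fun b => ((hM _ (hφ (ψ b)) _ (hψ b)).1.mp rfl)
           map_rel_iff' := fun {a a'} => ((hM _ (hφ a) _ (hφ a')).2).symm }⟩

theorem HasPropR.nonempty_iso [Countable A] [Countable B] (h₁ : G₁.HasPropR)
    (h₂ : G₂.HasPropR) : Nonempty (G₁ ≃g G₂) := by
  classical
  have : Encodable (A ⊕ B) := Encodable.ofCountable _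
  let 𝒟 := FinitePartialIso.definedAt h₁ h₂
  let I := Order.idealOfCofinals (⟨∅, by simp⟩ : G₁.FinitePartialIso G₂) 𝒟
  refine nonempty_iso_of_pairsCompatible (M := {p | ∃ f ∈ I, p ∈ f.1}) ?_ (fun a => ?_)
    (fun b => ?_)
  · rintro p ⟨f, hf, hp⟩ q ⟨g, hg, hq⟩
    obtain ⟨k, -, hfk, hgk⟩ := I.directed f hf g hg
    exact k.2 p (hfk hp) q (hgk hq)
  · obtain ⟨f, ⟨b, hb⟩, hf⟩ := Order.cofinal_meets_idealOfCofinals _ 𝒟 (Sum.inl a)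
    exact ⟨b, f, hf, hb⟩
  · obtain ⟨f, ⟨a, ha⟩, hf⟩ := Order.cofinal_meets_idealOfCofinals _ 𝒟 (Sum.inr b)
    exact ⟨a, f, hf, ha⟩

end SimpleGraph

namespace Subgroup

variable {G : Type*} [Group G]

lemma highlyCoreFree_bot [Infinite G] : (⊥ : Subgroup G).HighlyCoreFree := by
  classical
  intro F
  obtain ⟨g, hg⟩ := Infinite.exists_notMem_finset ((F ×ˢ F).image fun p => p.2 * p.1⁻¹)
  refine ⟨g, fun u hu v hv σ hσ h => hg ?_, fun u _ v _ huv σ hσ τ hτ h => huv ?_⟩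
  · rw [mem_bot.mp hσ, one_mul] at h
    exact Finset.mem_image.mpr ⟨(u, v), Finset.mem_product.mpr ⟨hu, hv⟩, by simp [← h]⟩
  · rw [mem_bot.mp hσ, mem_bot.mp hτ, one_mul, one_mul] at h
    exact mul_left_cancel h

/-- To separate `E`, apply high core-freeness to the quotients `u * v⁻¹` (`u, v ∈ E`) lying in
`H`: an `H`-translate of `u` can only meet one of `v` when `u * v⁻¹ ∈ H`. -/
lemma HighlyCoreFree.exists_separating {S H : Subgroup G} (hSH : S ≤ H)
    (hcf : (S.subgroupOf H).HighlyCoreFree) (E : Finset G) :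
    ∃ g ∈ H, (∀ u ∈ E, ∀ v ∈ E, ∀ σ ∈ S, g * u ≠ σ * v) ∧
      (∀ u ∈ E, ∀ v ∈ E, u ≠ v → ∀ σ ∈ S, ∀ τ ∈ S, σ * (g * u) ≠ τ * (g * v)) := by
  classical
  let Q : Finset H := ((E ×ˢ E).image fun p => p.1 * p.2⁻¹).subtype (· ∈ H)
  have hQ : ∀ x : H, ∀ u ∈ E, ∀ v ∈ E, (x : G) = u * v⁻¹ → x ∈ Q := fun x u hu v hv hx =>
    Finset.mem_subtype.mpr (Finset.mem_image.mpr ⟨(u, v), Finset.mem_product.mpr ⟨hu, hv⟩, hx.symm⟩)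
  obtain ⟨g, hg₁, hg₂⟩ := hcf Q
  refine ⟨g, g.2, fun u hu v hv σ hσ h => ?_, fun u hu v hv huv σ hσ τ hτ h => ?_⟩
  · have hw : u * v⁻¹ = (g : G)⁻¹ * σ := by
      rw [eq_inv_mul_iff_mul_eq, ← mul_assoc, h, mul_inv_cancel_right]
    refine hg₁ ⟨_, hw ▸ mul_mem (inv_mem g.2) (hSH hσ)⟩ (hQ _ u hu v hv rfl)
      1 (hQ 1 v hv v hv (mul_inv_cancel v).symm) ⟨σ, hSH hσ⟩ (mem_subgroupOf.mpr hσ) ?_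
    ext
    simp [hw]
  · have hw : u * v⁻¹ = (g : G)⁻¹ * (σ⁻¹ * (τ * g)) := by
      rw [eq_inv_mul_iff_mul_eq, eq_inv_mul_iff_mul_eq, ← mul_assoc, ← mul_assoc, mul_assoc σ,
        h, mul_assoc, mul_inv_cancel_right]
    have hmem : u * v⁻¹ ∈ H :=
      hw ▸ mul_mem (inv_mem g.2) (mul_mem (inv_mem (hSH hσ)) (mul_mem (hSH hτ) g.2))
    refine hg₂ ⟨_, hmem⟩ (hQ _ u hu v hv rfl) 1 (hQ 1 v hv v hv (mul_inv_cancel v).symm)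
      (fun h1 => huv (mul_inv_eq_one.mp (congrArg Subtype.val h1))) ⟨σ, hSH hσ⟩
      (mem_subgroupOf.mpr hσ) ⟨τ, hSH hτ⟩ (mem_subgroupOf.mpr hτ) ?_
    ext
    simp only [MulMemClass.coe_mul, mul_one, hw]
    group

end Subgroup

lemma exists_seq_frequently_eq (α : Type*) [Countable α] [Nonempty α] :
    ∃ e : ℕ → α, ∀ a, ∃ᶠ n in Filter.atTop, e n = a := by
  obtain ⟨s, hs⟩ := exists_surjective_nat α
  refine ⟨fun n => s n.unpair.1, fun a => Filter.frequently_atTop.mpr fun M => ?_⟩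
  obtain ⟨k, rfl⟩ := hs a
  exact ⟨Nat.pair k M, Nat.right_le_pair k M, by simp⟩

def FreeAction {Γ V : Type*} [Group Γ] {G : SimpleGraph V} (ρ : Γ →* (G ≃g G)) : Prop :=
  ∀ g x, ρ g x = x → g = 1

section Actions

variable {Γ V W : Type*} [Group Γ] {G : SimpleGraph V} {G' : SimpleGraph W}
  {ρ : Γ →* (G ≃g G)}

lemma SimpleGraph.HasPropR.propertyF (hG : G.HasPropR) (hfree : FreeAction ρ) :
    PropertyF G ρ := by
  intro S F hS
  obtain ⟨x, -, hxF, -, hx⟩ := hG ∅ F (Finset.disjoint_empty_left F)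
  exact ⟨x, hxF, hx, fun g hg hgx => hS (hfree g x hgx ▸ hg)⟩

lemma HighlyCoreFreeWrt.disconnects {H : Subgroup Γ} (h : HighlyCoreFreeWrt G ρ ⊥ H)
    (F : Finset V) :
    ∃ g ∈ H, (∀ u ∈ F, ρ g u ∉ F) ∧ ∀ u ∈ F, ∀ v ∈ F, ¬ G.Adj (ρ g u) v := by
  obtain ⟨g, hg, h₁, h₂, -⟩ := h F
  exact ⟨g, hg, fun u hu huF => h₁ u hu _ huF 1 (Subgroup.one_mem _) (by simp), h₂⟩

def SimpleGraph.Iso.conjHom (φ : G ≃g G') : (G ≃g G) →* (G' ≃g G') where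
  toFun f := φ.symm.trans (f.trans φ)
  map_one' := RelIso.ext φ.apply_symm_apply
  map_mul' f f' := RelIso.ext fun x => by simp [RelIso.mul_apply]

@[simp]
lemma SimpleGraph.Iso.conjHom_apply_apply (φ : G ≃g G') (f : G ≃g G) (x : V) :
    φ.conjHom f (φ x) = φ (f x) := by
  simp [conjHom]

variable (φ : G ≃g G')

lemma NonSingularAction.conj (h : NonSingularAction G ρ) :
    NonSingularAction G' (φ.conjHom.comp ρ) := by
  intro g u
  obtain ⟨x, rfl⟩ := φ.surjective u
  simpa [φ.map_adj_iff] using h g x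

lemma FreeAction.conj (h : FreeAction ρ) : FreeAction (φ.conjHom.comp ρ) := by
  intro g u hu
  obtain ⟨x, rfl⟩ := φ.surjective u
  exact h g x (by simpa using hu)

lemma HighlyCoreFreeWrt.conj {S H : Subgroup Γ} (h : HighlyCoreFreeWrt G ρ S H) :
    HighlyCoreFreeWrt G' (φ.conjHom.comp ρ) S H := by
  classical
  intro F
  obtain ⟨F₀, rfl⟩ : ∃ F₀ : Finset V, F₀.image φ = F :=
    ⟨F.image φ.symm, by simp [Finset.image_image, Function.comp_def]⟩
  simpa [Finset.forall_mem_image, φ.map_adj_iff] using h F₀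

end Actions

section LevelGraph

variable {Γ : Type*} [Group Γ] (e : ℕ → Finset (Γ × ℕ))

def levelGraph : SimpleGraph (Γ × ℕ) :=
  SimpleGraph.fromRel fun x y => x.2 < y.2 ∧ (y.1⁻¹ * x.1, x.2) ∈ e y.2

variable {e}

lemma levelGraph_adj_snd_ne {x y : Γ × ℕ} (h : (levelGraph e).Adj x y) : x.2 ≠ y.2 := by
  obtain ⟨-, ⟨hlt, -⟩ | ⟨hlt, -⟩⟩ := h
  exacts [hlt.ne, hlt.ne']

lemma levelGraph_adj_mul_left (g : Γ) (x y : Γ × ℕ) :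
    (levelGraph e).Adj (g * x.1, x.2) (g * y.1, y.2) ↔ (levelGraph e).Adj x y := by
  simp [levelGraph, mul_assoc, Prod.ext_iff]

variable (e) in
def levelGraph.mulLeft : Γ →* (levelGraph e ≃g levelGraph e) where
  toFun g :=
    { toEquiv := (Equiv.mulLeft g).prodCongr (Equiv.refl ℕ)
      map_rel_iff' := levelGraph_adj_mul_left g _ _ }
  map_one' := RelIso.ext fun x => Prod.ext (one_mul x.1) rfl
  map_mul' g h := RelIso.ext fun x => Prod.ext (mul_assoc g h x.1) rfl

@[simp]
lemma levelGraph.mulLeft_apply (g : Γ) (x : Γ × ℕ) :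
    levelGraph.mulLeft e g x = (g * x.1, x.2) := rfl

lemma levelGraph.freeAction_mulLeft : FreeAction (levelGraph.mulLeft e) :=
  fun _ _ h => mul_eq_right.mp (congrArg Prod.fst h)

lemma levelGraph.nonSingularAction_mulLeft : NonSingularAction (levelGraph e) (mulLeft e) :=
  fun _ _ h => levelGraph_adj_snd_ne h rfl

lemma levelGraph_hasPropR (he : ∀ A, ∃ᶠ n in Filter.atTop, e n = A) :
    (levelGraph e).HasPropR := by
  classical
  intro U W hUW
  obtain ⟨N, hU, hN⟩ :=
    ((he U).and_eventually (Filter.eventually_gt_atTop ((U ∪ W).sup Prod.snd))).exists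
  have hlt : ∀ u ∈ U ∪ W, u.2 < N := fun u hu => (Finset.le_sup hu).trans_lt hN
  have hne : ∀ u ∈ U ∪ W, ((1 : Γ), N) ≠ u := fun u hu h => (hlt u hu).ne (congrArg Prod.snd h).symm
  refine ⟨(1, N), fun h => hne _ (Finset.mem_union_left _ h) rfl,
    fun h => hne _ (Finset.mem_union_right _ h) rfl, fun u hu => ?_, fun w hw => ?_⟩
  · exact ⟨hne u (Finset.mem_union_left _ hu),
      Or.inr ⟨hlt u (Finset.mem_union_left _ hu), by simpa [hU] using hu⟩⟩
  · rintro ⟨-, ⟨hNw, -⟩ | ⟨-, hwU⟩⟩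
    · exact (hlt w (Finset.mem_union_right _ hw)).not_gt hNw
    · simp only [inv_one, one_mul, hU] at hwU
      exact Finset.disjoint_left.mp hUW hwU hw

lemma levelGraph_exists_finset_forall_adj_eq_mul (T : Finset ℕ) :
    ∃ D : Finset Γ, 1 ∈ D ∧
      ∀ x y, x.2 ∈ T → y.2 ∈ T → (levelGraph e).Adj x y → ∃ d ∈ D, y.1 = x.1 * d := by
  classical
  let B := (T.biUnion e).image Prod.fst
  have hB : ∀ x n m, n ∈ T → (x, m) ∈ e n → x ∈ B := fun x n m hn hx =>
    Finset.mem_image.mpr ⟨(x, m), Finset.mem_biUnion.mpr ⟨n, hn, hx⟩, rfl⟩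
  refine ⟨insert 1 (B ∪ B.image (·⁻¹)), Finset.mem_insert_self _ _, ?_⟩
  rintro x y hx hy ⟨-, ⟨-, hxy⟩ | ⟨-, hyx⟩⟩
  · refine ⟨(y.1⁻¹ * x.1)⁻¹, Finset.mem_insert_of_mem (Finset.mem_union_right _ ?_), by group⟩
    exact Finset.mem_image_of_mem _ (hB _ _ _ hy hxy)
  · exact ⟨x.1⁻¹ * y.1, Finset.mem_insert_of_mem (Finset.mem_union_left _ (hB _ _ _ hx hyx)),
      by group⟩

open scoped Pointwise in
lemma levelGraph.highlyCoreFreeWrt_mulLeft {S H : Subgroup Γ} (hSH : S ≤ H)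
    (hcf : (S.subgroupOf H).HighlyCoreFree) :
    HighlyCoreFreeWrt (levelGraph e) (mulLeft e) S H := by
  classical
  intro F
  obtain ⟨D, hD1, hD⟩ := levelGraph_exists_finset_forall_adj_eq_mul (e := e) (F.image Prod.snd)
  have hadj : ∀ {a b : Γ} {x y : Γ × ℕ}, x ∈ F → y ∈ F →
      (levelGraph e).Adj (mulLeft e a x) (mulLeft e b y) → ∃ d ∈ D, b * y.1 = a * x.1 * d :=
    fun hx hy => hD _ _ (Finset.mem_image_of_mem Prod.snd hx : _)
      (Finset.mem_image_of_mem Prod.snd hy : _)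
  let E := F.image Prod.fst * D
  have hE : ∀ x ∈ F, ∀ d ∈ D, x.1 * d ∈ E := fun x hx d hd =>
    Finset.mul_mem_mul (Finset.mem_image_of_mem _ hx) hd
  have hE1 : ∀ x ∈ F, x.1 ∈ E := fun x hx => mul_one x.1 ▸ hE x hx 1 hD1
  obtain ⟨g, hgH, hg₁, hg₂⟩ := hcf.exists_separating hSH E
  refine ⟨g, hgH, fun u hu v hv σ hσ h => ?_, fun u hu v hv h => ?_,
    fun u hu v hv huv σ hσ τ hτ h => ?_, fun u hu v hv σ hσ hσ1 h => ?_⟩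
  · exact hg₁ _ (hE1 u hu) _ (hE1 v hv) σ hσ (congrArg Prod.fst h)
  · obtain ⟨d, hd, hvd⟩ := hadj (b := 1) hu hv (by simpa using h)
    exact hg₁ _ (hE u hu d hd) _ (hE1 v hv) 1 S.one_mem (by rw [hvd, mul_assoc])
  · simp only [levelGraph.mulLeft_apply, Prod.mk.injEq] at h
    by_cases h₁ : u.1 = v.1
    · exact huv (Prod.ext h₁ h.2)
    · exact hg₂ _ (hE1 u hu) _ (hE1 v hv) h₁ σ hσ τ hτ h.1
  · obtain ⟨d, hd, hvd⟩ := hadj (a := σ * g) hu hv (by simpa [mul_assoc] using h)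
    by_cases h₁ : v.1 = u.1 * d
    · rw [h₁] at hvd
      exact hσ1 (by simpa [mul_assoc] using hvd.symm)
    · exact hg₂ _ (hE1 v hv) _ (hE u hu d hd) h₁ 1 S.one_mem σ hσ (by simp [hvd, mul_assoc])

end LevelGraph

theorem exists_nice_relative_action_general {Γ : Type*} [Group Γ] [Countable Γ]
    (S : Subgroup Γ) {V : Type*} [Countable V]
    (R : SimpleGraph V) (hR : R.HasPropR) :
    ∃ ρ : Γ →* (R ≃g R),
      NonSingularAction R ρ ∧ PropertyF R ρ ∧
      (∀ σ ∈ S, ∀ x : V, ρ σ x = x → σ = 1) ∧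
      (∀ H : Subgroup Γ, Infinite H →
        ∀ F : Finset V, ∃ h ∈ H, (∀ u ∈ F, ρ h u ∉ F) ∧
          ∀ u ∈ F, ∀ v ∈ F, ¬ R.Adj (ρ h u) v) ∧
      (∀ S' H' : Subgroup Γ, S' ≤ H' → (S'.subgroupOf H').HighlyCoreFree →
        HighlyCoreFreeWrt R ρ S' H') := by
  obtain ⟨e, he⟩ := exists_seq_frequently_eq (Finset (Γ × ℕ))
  obtain ⟨φ⟩ := (levelGraph_hasPropR he).nonempty_iso hR
  have hfree := (levelGraph.freeAction_mulLeft (e := e)).conj φ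
  have hcf : ∀ S' H' : Subgroup Γ, S' ≤ H' → (S'.subgroupOf H').HighlyCoreFree →
      HighlyCoreFreeWrt R (φ.conjHom.comp (levelGraph.mulLeft e)) S' H' :=
    fun _ _ hSH hcf => (levelGraph.highlyCoreFreeWrt_mulLeft hSH hcf).conj φ
  refine ⟨φ.conjHom.comp (levelGraph.mulLeft e), levelGraph.nonSingularAction_mulLeft.conj φ,
    hR.propertyF hfree, fun σ _ => hfree σ, fun H _ => ?_, hcf⟩
  refine (hcf ⊥ H bot_le ?_).disconnects
  rw [Subgroup.bot_subgroupOf]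
  exact Subgroup.highlyCoreFree_bot

/-- Given a finite subgroup `S` of an infinite countable group `Γ`, there is a
non-singular action of `Γ` with property (F) on any countable graph with property (R)
such that `S` acts freely, every infinite subgroup disconnects the finite sets, and
highly core-free pairs of subgroups are highly core-free with respect to the
restricted action. -/
theorem exists_nice_relative_action {Γ : Type*} [Group Γ] [Countable Γ] [Infinite Γ]
    (S : Subgroup Γ) [Finite S] {V : Type*} [Countable V]
    (R : SimpleGraph V) (hR : R.HasPropR) :
    ∃ ρ : Γ →* (R ≃g R),
      NonSingularAction R ρ ∧ PropertyF R ρ ∧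
      (∀ σ ∈ S, ∀ x : V, ρ σ x = x → σ = 1) ∧
      (∀ H : Subgroup Γ, Infinite H →
        ∀ F : Finset V, ∃ h ∈ H, (∀ u ∈ F, ρ h u ∉ F) ∧
          ∀ u ∈ F, ∀ v ∈ F, ¬ R.Adj (ρ h u) v) ∧
      (∀ S' H' : Subgroup Γ, S' ≤ H' → (S'.subgroupOf H').HighlyCoreFree →
        HighlyCoreFreeWrt R ρ S' H') :=
  exists_nice_relative_action_general S R hR
end

section
/- Let Σ be a common finite subgroup of countable groups Γ₁ and Γ₂, let Γ = Γ₁ *_Σ Γ₂ be the amalgamated free product, and let ρ : Γ → Aut(R) be a faithful action on a countable simple graph R with property (R) that is non-singular and has property (F), such that the restricted action of Σ on R is free and Σ is highly core-free with respect to both restricted actions Γ₁↷R and Γ₂↷R. Let Z = { α ∈ Aut(R) : α ρ(σ) = ρ(σ) α for all σ ∈ Σ }, and for α ∈ Z let π_α : Γ → Aut(R) be the unique homomorphism with π_α(g) = ρ(g) for g ∈ Γ₁ and π_α(g) = α⁻¹ ρ(g) α for g ∈ Γ₂. Then the set O = { α ∈ Z : π_α is faithful and homogeneous } is a dense G_δ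 subset of Z. -/
/-- The Polish topology of pointwise convergence on the automorphism group of a graph,
induced by the embedding `α ↦ (α, α⁻¹)` into `(V → V) × (V → V)` with `V` discrete. -/
instance graphAutTopology {V : Type*} (G : SimpleGraph V) :
    TopologicalSpace (G ≃g G) :=
  letI : TopologicalSpace V := ⊥
  TopologicalSpace.induced
    (fun α => ((fun x => α x, fun x => α.symm x) : (V → V) × (V → V))) inferInstance

/-- `Γ` is the amalgamated free product of its subgroups `Γ₁` and `Γ₂` over the common
subgroup `S`, expressed via the universal property of the pushout. -/
def IsAmalgamatedProduct {Γ : Type*} [Group Γ] (Γ₁ Γ₂ S : Subgroup Γ)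
    (h₁ : S ≤ Γ₁) (h₂ : S ≤ Γ₂) : Prop :=
  ∀ (H : Type) [Group H] (f₁ : Γ₁ →* H) (f₂ : Γ₂ →* H),
    (∀ (x : Γ) (hx : x ∈ S), f₁ ⟨x, h₁ hx⟩ = f₂ ⟨x, h₂ hx⟩) →
    ∃! f : Γ →* H, (∀ a : Γ₁, f a = f₁ a) ∧ (∀ b : Γ₂, f b = f₂ b)

/-!
`π_α g x` depends on only finitely many values of `α` and `α⁻¹`, so each requirement "`g ≠ 1`
moves some vertex" and "the finite partial isomorphism `L` is realised" is open in `Z`; there are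
countably many of them, whence `G_δ`.

Density is a back-and-forth construction of `α` through finite `ρ(S)`-equivariant partial
isomorphisms extending a finite piece of a given point of `Z`: property (R) supplies the back and
forth steps, freeness of `S` lets a whole orbit be added at once, and non-singularity means an
orbit spans no edges. Every `g ∉ Γ₁` is a reduced word `c b c₁ b₁ ⋯ cₙ bₙ c₀`, and property (F)
lets us route a fresh vertex through the letters, always to fresh vertices, so that `π_α g` moves
it. To realise `L`, high core-freeness yields `s ∈ Γ₁` and `t ∈ Γ₂` whose translates of the
current finite data are far apart; sending the orbit of `ρ s y` to that of `ρ t (α x)` for each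
`(x, y) ∈ L` makes `π_α (s⁻¹ t)` agree with `L`. Meeting all countably many requirements is the
Rasiowa–Sikorski lemma.
-/

namespace HomogeneousAmalgam

open Function
open scoped Classical

variable {Γ : Type*} [Group Γ] {V : Type*} {R : SimpleGraph V}

section ReducedForm

variable (Γ₁ Γ₂ S : Subgroup Γ)

def chunkProd (ps : List (Γ × Γ)) : Γ := (ps.map fun pr => pr.1 * pr.2).prod

@[simp] lemma chunkProd_nil : chunkProd ([] : List (Γ × Γ)) = 1 := rfl

@[simp] lemma chunkProd_cons (pr : Γ × Γ) (ps : List (Γ × Γ)) :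
    chunkProd (pr :: ps) = pr.1 * pr.2 * chunkProd ps := rfl

def IsReducedPair (pr : Γ × Γ) : Prop := pr.1 ∈ Γ₁ ∧ pr.1 ∉ S ∧ pr.2 ∈ Γ₂ ∧ pr.2 ∉ S

/-- `g ∈ Γ₁`, or `g = c b c₁ b₁ ⋯ cₙ bₙ c₀` with `ps = [(c₁, b₁), …, (cₙ, bₙ)]`, all `cᵢ ∈ Γ₁`,
`bᵢ ∈ Γ₂ \ S`, and only the outermost letter `c` allowed to lie in `S`. -/
def HasReducedForm (g : Γ) : Prop :=
  g ∈ Γ₁ ∨ ∃ c ∈ Γ₁, ∃ b ∈ Γ₂, b ∉ S ∧ ∃ ps : List (Γ × Γ),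
    (∀ pr ∈ ps, IsReducedPair Γ₁ Γ₂ S pr) ∧ ∃ c₀ ∈ Γ₁, g = c * b * chunkProd ps * c₀

variable {Γ₁ Γ₂ S}

lemma HasReducedForm.mul_left_of_mem_left {x g : Γ} (hx : x ∈ Γ₁)
    (hg : HasReducedForm Γ₁ Γ₂ S g) : HasReducedForm Γ₁ Γ₂ S (x * g) := by
  rcases hg with hg | ⟨c, hc, b, hb, hbS, ps, hps, c₀, hc₀, rfl⟩
  · exact Or.inl (mul_mem hx hg)
  · exact Or.inr ⟨x * c, mul_mem hx hc, b, hb, hbS, ps, hps, c₀, hc₀, by simp only [mul_assoc]⟩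

lemma hasReducedForm_chunkProd_mul {ps : List (Γ × Γ)} (hps : ∀ pr ∈ ps, IsReducedPair Γ₁ Γ₂ S pr)
    {c₀ : Γ} (hc₀ : c₀ ∈ Γ₁) : HasReducedForm Γ₁ Γ₂ S (chunkProd ps * c₀) := by
  cases ps with
  | nil => simpa [HasReducedForm] using Or.inl hc₀
  | cons pr ps =>
    obtain ⟨hc, -, hb, hbS⟩ := hps pr List.mem_cons_self
    exact Or.inr ⟨pr.1, hc, pr.2, hb, hbS, ps, fun q hq => hps q (List.mem_cons_of_mem _ hq),
      c₀, hc₀, rfl⟩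

lemma HasReducedForm.mul_left_of_mem_right (hS₁ : S ≤ Γ₁) (hS₂ : S ≤ Γ₂) {x g : Γ}
    (hx : x ∈ Γ₂) (hg : HasReducedForm Γ₁ Γ₂ S g) : HasReducedForm Γ₁ Γ₂ S (x * g) := by
  by_cases hxS : x ∈ S
  · exact hg.mul_left_of_mem_left (hS₁ hxS)
  rcases hg with hg | ⟨c, hc, b, hb, hbS, ps, hps, c₀, hc₀, rfl⟩
  · exact Or.inr ⟨1, one_mem _, x, hx, hxS, [], by simp, g, hg, by simp⟩
  by_cases hcS : c ∈ S
  · have hxcb : x * c * b ∈ Γ₂ := mul_mem (mul_mem hx (hS₂ hcS)) hb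
    by_cases hxcbS : x * c * b ∈ S
    · simpa only [mul_assoc] using
        (hasReducedForm_chunkProd_mul hps hc₀).mul_left_of_mem_left (hS₁ hxcbS)
    · exact Or.inr ⟨1, one_mem _, x * c * b, hxcb, hxcbS, ps, hps, c₀, hc₀, by simp [mul_assoc]⟩
  · refine Or.inr ⟨1, one_mem _, x, hx, hxS, (c, b) :: ps, ?_, c₀, hc₀, by simp [mul_assoc]⟩
    intro pr hpr
    rcases List.mem_cons.1 hpr with rfl | hpr
    exacts [⟨hc, hcS, hb, hbS⟩, hps pr hpr]

lemma hasReducedForm (hgen : Γ₁ ⊔ Γ₂ = ⊤) (hS₁ : S ≤ Γ₁) (hS₂ : S ≤ Γ₂) (g : Γ) :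
    HasReducedForm Γ₁ Γ₂ S g := by
  have hg : g ∈ Subgroup.closure ((Γ₁ : Set Γ) ∪ Γ₂) := by
    simp [Subgroup.closure_union, hgen]
  induction hg using Subgroup.closure_induction_left with
  | one => exact Or.inl (one_mem _)
  | mul_left x hx y _ ih =>
    rcases hx with hx | hx
    exacts [ih.mul_left_of_mem_left hx, ih.mul_left_of_mem_right hS₁ hS₂ hx]
  | inv_mul_cancel x hx y _ ih =>
    rcases hx with hx | hx
    exacts [ih.mul_left_of_mem_left (inv_mem hx), ih.mul_left_of_mem_right hS₁ hS₂ (inv_mem hx)]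

end ReducedForm

lemma IsAmalgamatedProduct.sup_eq_top {Γ : Type} [Group Γ] {Γ₁ Γ₂ S : Subgroup Γ}
    {h₁ : S ≤ Γ₁} {h₂ : S ≤ Γ₂} (hamalg : IsAmalgamatedProduct Γ₁ Γ₂ S h₁ h₂) :
    Γ₁ ⊔ Γ₂ = ⊤ := by
  let K := Γ₁ ⊔ Γ₂
  obtain ⟨f, ⟨hf₁, hf₂⟩, -⟩ := hamalg K (Subgroup.inclusion le_sup_left)
    (Subgroup.inclusion le_sup_right) fun _ _ => rfl
  have hid : K.subtype.comp f = MonoidHom.id Γ :=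
    (hamalg Γ Γ₁.subtype Γ₂.subtype fun _ _ => rfl).unique
      ⟨fun a => by simp [hf₁ a], fun b => by simp [hf₂ b]⟩ ⟨fun _ => rfl, fun _ => rfl⟩
  refine eq_top_iff.2 fun g _ => ?_
  have hg : ((f g : K) : Γ) = g := congrArg (· g) hid
  exact hg ▸ (f g).2

section Action

variable (ρ : Γ →* (R ≃g R))

def IsFreeOn (S : Subgroup Γ) : Prop := ∀ σ ∈ S, ∀ x : V, ρ σ x = x → σ = 1

lemma apply_mul (a b : Γ) (x : V) : ρ (a * b) x = ρ a (ρ b x) := by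
  rw [map_mul]; rfl

@[simp] lemma inv_apply_apply (a : Γ) (x : V) : ρ a⁻¹ (ρ a x) = x := by
  rw [← apply_mul, inv_mul_cancel, map_one]; rfl

@[simp] lemma apply_inv_apply (a : Γ) (x : V) : ρ a (ρ a⁻¹ x) = x := by
  rw [← apply_mul, mul_inv_cancel, map_one]; rfl

lemma adj_apply_left_iff (a : Γ) (x y : V) : R.Adj (ρ a x) y ↔ R.Adj x (ρ a⁻¹ y) := by
  rw [← (ρ a).map_adj_iff (v := x), apply_inv_apply]

lemma not_adj_apply_apply (hns : NonSingularAction R ρ) (a b : Γ) (x : V) :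
    ¬ R.Adj (ρ a x) (ρ b x) := by
  rw [adj_apply_left_iff, ← apply_mul, R.adj_comm]
  exact hns _ x

end Action

section Orbit

variable (ρ : Γ →* (R ≃g R)) (S : Subgroup Γ) [Fintype S]

noncomputable def orbit (z : V) : Finset V := Finset.univ.image fun σ : S => ρ σ z

variable {ρ S}

lemma mem_orbit {z y : V} : y ∈ orbit ρ S z ↔ ∃ σ ∈ S, ρ σ z = y := by
  simp [orbit]

lemma apply_mem_orbit {σ : Γ} (hσ : σ ∈ S) (z : V) : ρ σ z ∈ orbit ρ S z :=
  mem_orbit.2 ⟨σ, hσ, rfl⟩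

lemma mem_orbit_self (z : V) : z ∈ orbit ρ S z := by
  simpa using apply_mem_orbit (ρ := ρ) (one_mem S) z

end Orbit

section Fresh

variable (R) in
def IsFresh (D : Finset V) (x : V) : Prop := x ∉ D ∧ ∀ w ∈ D, ¬ R.Adj x w

variable {ρ : Γ →* (R ≃g R)} {S : Subgroup Γ} [Fintype S] {D E : Finset V} {x : V}

lemma IsFresh.mono (h : IsFresh R E x) (hDE : D ⊆ E) : IsFresh R D x :=
  ⟨fun hx => h.1 (hDE hx), fun w hw => h.2 w (hDE hw)⟩

lemma IsFresh.apply {g : Γ} (h : IsFresh R (D.image (ρ g⁻¹)) x) : IsFresh R D (ρ g x) := by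
  refine ⟨fun hx => h.1 ?_, fun w hw => ?_⟩
  · simpa using Finset.mem_image_of_mem (ρ g⁻¹) hx
  · rw [adj_apply_left_iff]
    exact h.2 _ (Finset.mem_image_of_mem _ hw)

lemma IsFresh.union_orbit (hns : NonSingularAction R ρ) {g : Γ} {u : V}
    (h : IsFresh R D (ρ g u)) (hu : ρ g u ∉ orbit ρ S u) :
    IsFresh R (D ∪ orbit ρ S u) (ρ g u) := by
  refine ⟨by simp [h.1, hu], fun w hw => ?_⟩
  rcases Finset.mem_union.1 hw with hw | hw
  · exact h.2 w hw
  · obtain ⟨σ, -, rfl⟩ := mem_orbit.1 hw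
    exact not_adj_apply_apply ρ hns g σ u

lemma exists_fresh_translate (hF : PropertyF R ρ) (D E : Finset V) (c : Γ) :
    ∃ u, IsFresh R D u ∧ IsFresh R E (ρ c u) ∧ (c ∉ S → ρ c u ∉ orbit ρ S u) := by
  let T : Finset Γ := if c ∈ S then ∅ else Finset.univ.image fun σ : S => (σ : Γ)⁻¹ * c
  have hT : (1 : Γ) ∉ T := by
    by_cases hc : c ∈ S
    · simp [T, hc]
    · simp only [T, hc, if_false, Finset.mem_image, Finset.mem_univ, true_and, not_exists]
      intro σ h
      exact hc (by simpa [inv_mul_eq_one.1 h] using σ.2)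
  obtain ⟨u, hu, hadj, hmoved⟩ := hF T (D ∪ E.image (ρ c⁻¹)) hT
  have hfresh : IsFresh R (D ∪ E.image (ρ c⁻¹)) u := ⟨hu, hadj⟩
  refine ⟨u, hfresh.mono Finset.subset_union_left,
    (hfresh.mono Finset.subset_union_right).apply, fun hc hmem => ?_⟩
  obtain ⟨σ, hσ, hσu⟩ := mem_orbit.1 hmem
  refine hmoved (σ⁻¹ * c) (by simp [T, hc, hσ]) ?_
  rw [apply_mul, ← hσu, inv_apply_apply]

end Fresh

/-- `toFun` and `invFun` are total functions; only their values on `dom` and `ran` matter. -/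
structure PartialIso (ρ : Γ →* (R ≃g R)) (S : Subgroup Γ) where
  dom : Finset V
  ran : Finset V
  toFun : V → V
  invFun : V → V
  map_dom : ∀ x ∈ dom, toFun x ∈ ran
  map_ran : ∀ y ∈ ran, invFun y ∈ dom
  left_inv : ∀ x ∈ dom, invFun (toFun x) = x
  right_inv : ∀ y ∈ ran, toFun (invFun y) = y
  adj_iff : ∀ u ∈ dom, ∀ v ∈ dom, R.Adj (toFun u) (toFun v) ↔ R.Adj u v
  apply_mem_dom : ∀ σ ∈ S, ∀ x ∈ dom, ρ σ x ∈ dom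
  map_apply : ∀ σ ∈ S, ∀ x ∈ dom, toFun (ρ σ x) = ρ σ (toFun x)

namespace PartialIso

variable {ρ : Γ →* (R ≃g R)} {S : Subgroup Γ}

instance : CoeFun (PartialIso ρ S) fun _ => V → V := ⟨toFun⟩

variable (p : PartialIso ρ S)

lemma injOn {x y : V} (hx : x ∈ p.dom) (hy : y ∈ p.dom) (h : p x = p y) : x = y := by
  rw [← p.left_inv x hx, ← p.left_inv y hy]
  exact congrArg p.invFun h

lemma apply_notMem_dom {σ : Γ} (hσ : σ ∈ S) {x : V} (hx : x ∉ p.dom) : ρ σ x ∉ p.dom :=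
  fun h => hx (by simpa using p.apply_mem_dom σ⁻¹ (inv_mem hσ) _ h)

lemma disjoint_dom_orbit [Fintype S] {z : V} (hz : z ∉ p.dom) : Disjoint p.dom (orbit ρ S z) := by
  refine Finset.disjoint_right.2 fun y hy => ?_
  obtain ⟨σ, hσ, rfl⟩ := mem_orbit.1 hy
  exact p.apply_notMem_dom hσ hz

lemma apply_mem_ran : ∀ σ ∈ S, ∀ y ∈ p.ran, ρ σ y ∈ p.ran := by
  intro σ hσ y hy
  rw [← p.right_inv y hy, ← p.map_apply σ hσ _ (p.map_ran y hy)]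
  exact p.map_dom _ (p.apply_mem_dom σ hσ _ (p.map_ran y hy))

lemma invFun_apply : ∀ σ ∈ S, ∀ y ∈ p.ran, p.invFun (ρ σ y) = ρ σ (p.invFun y) := by
  intro σ hσ y hy
  rw [← p.right_inv y hy, ← p.map_apply σ hσ _ (p.map_ran y hy),
    p.left_inv _ (p.apply_mem_dom σ hσ _ (p.map_ran y hy)), p.left_inv _ (p.map_ran y hy)]

lemma adj_invFun_iff : ∀ u ∈ p.ran, ∀ v ∈ p.ran, R.Adj (p.invFun u) (p.invFun v) ↔ R.Adj u v := by
  intro u hu v hv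
  conv_rhs => rw [← p.right_inv u hu, ← p.right_inv v hv]
  exact (p.adj_iff _ (p.map_ran u hu) _ (p.map_ran v hv)).symm

def symm : PartialIso ρ S where
  dom := p.ran
  ran := p.dom
  toFun := p.invFun
  invFun := p.toFun
  map_dom := p.map_ran
  map_ran := p.map_dom
  left_inv := p.right_inv
  right_inv := p.left_inv
  adj_iff := p.adj_invFun_iff
  apply_mem_dom := p.apply_mem_ran
  map_apply := p.invFun_apply

instance : Preorder (PartialIso ρ S) where
  le p q := p.dom ⊆ q.dom ∧ ∀ x ∈ p.dom, q x = p x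
  le_refl p := ⟨subset_rfl, fun _ _ => rfl⟩
  le_trans p q r hpq hqr := ⟨hpq.1.trans hqr.1, fun x hx => by rw [hqr.2 x (hpq.1 hx), hpq.2 x hx]⟩

variable {p} {q : PartialIso ρ S}

lemma ran_subset_of_le (h : p ≤ q) : p.ran ⊆ q.ran := by
  intro y hy
  rw [← p.right_inv y hy, ← h.2 _ (p.map_ran y hy)]
  exact q.map_dom _ (h.1 (p.map_ran y hy))

lemma symm_le_symm (h : p ≤ q) : p.symm ≤ q.symm := by
  refine ⟨ran_subset_of_le h, fun y hy => ?_⟩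
  change q.invFun y = p.invFun y
  conv_lhs => rw [← p.right_inv y hy, ← h.2 _ (p.map_ran y hy)]
  exact q.left_inv _ (h.1 (p.map_ran y hy))

noncomputable def union (p q : PartialIso ρ S) (hdom : Disjoint p.dom q.dom)
    (hran : Disjoint p.ran q.ran)
    (hadj : ∀ u ∈ p.dom, ∀ w ∈ q.dom, R.Adj (p u) (q w) ↔ R.Adj u w) : PartialIso ρ S where
  dom := p.dom ∪ q.dom
  ran := p.ran ∪ q.ran
  toFun x := if x ∈ p.dom then p x else q x
  invFun y := if y ∈ p.ran then p.invFun y else q.invFun y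
  map_dom x hx := by
    by_cases h : x ∈ p.dom
    · simp [h, p.map_dom x h]
    · simp [h, q.map_dom x ((Finset.mem_union.1 hx).resolve_left h)]
  map_ran y hy := by
    by_cases h : y ∈ p.ran
    · simp [h, p.map_ran y h]
    · simp [h, q.map_ran y ((Finset.mem_union.1 hy).resolve_left h)]
  left_inv x hx := by
    by_cases h : x ∈ p.dom
    · simp [h, p.map_dom x h, p.left_inv x h]
    · have hq := (Finset.mem_union.1 hx).resolve_left h
      simp [h, Finset.disjoint_right.1 hran (q.map_dom x hq), q.left_inv x hq]
  right_inv y hy := by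
    by_cases h : y ∈ p.ran
    · simp [h, p.map_ran y h, p.right_inv y h]
    · have hq := (Finset.mem_union.1 hy).resolve_left h
      simp [h, Finset.disjoint_right.1 hdom (q.map_ran y hq), q.right_inv y hq]
  adj_iff u hu v hv := by
    rcases Finset.mem_union.1 hu with hu | hu <;> rcases Finset.mem_union.1 hv with hv | hv
    · simp [hu, hv, p.adj_iff u hu v hv]
    · simp [hu, Finset.disjoint_right.1 hdom hv, hadj u hu v hv]
    · simp [hv, Finset.disjoint_right.1 hdom hu, R.adj_comm, hadj v hv u hu]
    · simp [Finset.disjoint_right.1 hdom hu, Finset.disjoint_right.1 hdom hv, q.adj_iff u hu v hv]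
  apply_mem_dom σ hσ x hx := by
    rcases Finset.mem_union.1 hx with hx | hx
    · exact Finset.mem_union_left _ (p.apply_mem_dom σ hσ x hx)
    · exact Finset.mem_union_right _ (q.apply_mem_dom σ hσ x hx)
  map_apply σ hσ x hx := by
    by_cases h : x ∈ p.dom
    · simp [h, p.apply_mem_dom σ hσ x h, p.map_apply σ hσ x h]
    · have hq := (Finset.mem_union.1 hx).resolve_left h
      simp [h, p.apply_notMem_dom hσ h, q.map_apply σ hσ x hq]

variable {q : PartialIso ρ S} {hdom : Disjoint p.dom q.dom} {hran : Disjoint p.ran q.ran}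
  {hadj : ∀ u ∈ p.dom, ∀ w ∈ q.dom, R.Adj (p u) (q w) ↔ R.Adj u w}

lemma le_union : p ≤ p.union q hdom hran hadj :=
  ⟨Finset.subset_union_left, fun _ hx => if_pos hx⟩

lemma union_apply_of_mem_right {x : V} (hx : x ∈ q.dom) : p.union q hdom hran hadj x = q x :=
  if_neg (Finset.disjoint_right.1 hdom hx)

end PartialIso

section OrbitIso

variable {ρ : Γ →* (R ≃g R)} {S : Subgroup Γ}

lemma eq_of_apply_eq (hfree : IsFreeOn ρ S) {σ τ : Γ} (hσ : σ ∈ S)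
    (hτ : τ ∈ S) {x : V} (h : ρ σ x = ρ τ x) : σ = τ := by
  refine (inv_mul_eq_one.1 (hfree _ (mul_mem (inv_mem hτ) hσ) x ?_)).symm
  rw [apply_mul, h, inv_apply_apply]

variable (ρ S) in
/-- `ρ σ z ↦ ρ σ v`, which is well defined on the orbit of `z` when `S` acts freely. -/
noncomputable def orbitMap (z v x : V) : V :=
  if h : ∃ σ ∈ S, ρ σ z = x then ρ h.choose v else x

lemma orbitMap_apply (hfree : IsFreeOn ρ S) {σ : Γ} (hσ : σ ∈ S) (z v : V) :
    orbitMap ρ S z v (ρ σ z) = ρ σ v := by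
  have h : ∃ τ ∈ S, ρ τ z = ρ σ z := ⟨σ, hσ, rfl⟩
  rw [orbitMap, dif_pos h, eq_of_apply_eq hfree h.choose_spec.1 hσ h.choose_spec.2]

lemma orbitMap_self (hfree : IsFreeOn ρ S) (z v : V) :
    orbitMap ρ S z v z = v := by
  simpa using orbitMap_apply hfree (one_mem S) z v

variable [Fintype S]

noncomputable def orbitIso (hfree : IsFreeOn ρ S)
    (hns : NonSingularAction R ρ) (z v : V) : PartialIso ρ S where
  dom := orbit ρ S z
  ran := orbit ρ S v
  toFun := orbitMap ρ S z v
  invFun := orbitMap ρ S v z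
  map_dom x hx := by
    obtain ⟨σ, hσ, rfl⟩ := mem_orbit.1 hx
    rw [orbitMap_apply hfree hσ]
    exact apply_mem_orbit hσ v
  map_ran y hy := by
    obtain ⟨σ, hσ, rfl⟩ := mem_orbit.1 hy
    rw [orbitMap_apply hfree hσ]
    exact apply_mem_orbit hσ z
  left_inv x hx := by
    obtain ⟨σ, hσ, rfl⟩ := mem_orbit.1 hx
    rw [orbitMap_apply hfree hσ, orbitMap_apply hfree hσ]
  right_inv y hy := by
    obtain ⟨σ, hσ, rfl⟩ := mem_orbit.1 hy
    rw [orbitMap_apply hfree hσ, orbitMap_apply hfree hσ]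
  adj_iff x hx y hy := by
    obtain ⟨σ, hσ, rfl⟩ := mem_orbit.1 hx
    obtain ⟨τ, hτ, rfl⟩ := mem_orbit.1 hy
    rw [orbitMap_apply hfree hσ, orbitMap_apply hfree hτ]
    exact iff_of_false (not_adj_apply_apply ρ hns σ τ v) (not_adj_apply_apply ρ hns σ τ z)
  apply_mem_dom σ hσ x hx := by
    obtain ⟨τ, hτ, rfl⟩ := mem_orbit.1 hx
    rw [← apply_mul]
    exact apply_mem_orbit (mul_mem hσ hτ) z
  map_apply σ hσ x hx := by
    obtain ⟨τ, hτ, rfl⟩ := mem_orbit.1 hx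
    rw [← apply_mul, orbitMap_apply hfree (mul_mem hσ hτ), orbitMap_apply hfree hτ, apply_mul]

end OrbitIso

namespace PartialIso

variable {ρ : Γ →* (R ≃g R)} {S : Subgroup Γ} [Fintype S]

/-- Only the adjacencies of `z` itself need checking: equivariance transports them to the rest of
its orbit, and by non-singularity an orbit spans no edges. -/
lemma exists_le_extend (hfree : IsFreeOn ρ S)
    (hns : NonSingularAction R ρ) (p : PartialIso ρ S) {z v : V} (hz : z ∉ p.dom) (hv : v ∉ p.ran)
    (hmatch : ∀ w ∈ p.dom, R.Adj v (p w) ↔ R.Adj z w) :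
    ∃ q, p ≤ q ∧ q.dom = p.dom ∪ orbit ρ S z ∧ q.ran = p.ran ∪ orbit ρ S v ∧ q z = v := by
  have hadj : ∀ u ∈ p.dom, ∀ w ∈ orbit ρ S z,
      R.Adj (p u) (orbitIso hfree hns z v w) ↔ R.Adj u w := by
    intro u hu w hw
    obtain ⟨σ, hσ, rfl⟩ := mem_orbit.1 hw
    change R.Adj (p u) (orbitMap ρ S z v (ρ σ z)) ↔ _
    rw [orbitMap_apply hfree hσ, R.adj_comm, adj_apply_left_iff, ← p.map_apply _ (inv_mem hσ) u hu,
      hmatch _ (p.apply_mem_dom _ (inv_mem hσ) u hu), ← adj_apply_left_iff, R.adj_comm]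
  refine ⟨p.union (orbitIso hfree hns z v) (p.disjoint_dom_orbit hz)
    (p.symm.disjoint_dom_orbit hv) hadj, le_union, rfl, rfl, ?_⟩
  exact (union_apply_of_mem_right (q := orbitIso hfree hns z v) (mem_orbit_self z)).trans
    (orbitMap_self hfree z v)

lemma exists_le_extend_of_isFresh (hfree : IsFreeOn ρ S)
    (hns : NonSingularAction R ρ) (p : PartialIso ρ S) {z v : V} (hz : IsFresh R p.dom z)
    (hv : IsFresh R p.ran v) :
    ∃ q, p ≤ q ∧ q.dom = p.dom ∪ orbit ρ S z ∧ q.ran = p.ran ∪ orbit ρ S v ∧ q z = v :=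
  p.exists_le_extend hfree hns hz.1 hv.1 fun w hw =>
    iff_of_false (hv.2 _ (p.map_dom w hw)) (hz.2 w hw)

lemma exists_le_mem_dom (hR : R.HasPropR) (hfree : IsFreeOn ρ S)
    (hns : NonSingularAction R ρ) (p : PartialIso ρ S) (x : V) : ∃ q, p ≤ q ∧ x ∈ q.dom := by
  by_cases hx : x ∈ p.dom
  · exact ⟨p, le_rfl, hx⟩
  let U := (p.dom.filter (R.Adj x)).image p
  obtain ⟨v, hvU, hvW, hadjU, hnadjW⟩ := hR U (p.ran \ U) Finset.disjoint_sdiff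
  have hv : v ∉ p.ran := fun h => hvW (Finset.mem_sdiff.2 ⟨h, hvU⟩)
  have hmatch : ∀ w ∈ p.dom, R.Adj v (p w) ↔ R.Adj x w := by
    intro w hw
    by_cases hxw : R.Adj x w
    · exact iff_of_true (hadjU _ (Finset.mem_image_of_mem _ (Finset.mem_filter.2 ⟨hw, hxw⟩))) hxw
    · refine iff_of_false (hnadjW _ (Finset.mem_sdiff.2 ⟨p.map_dom w hw, ?_⟩)) hxw
      simp only [U, Finset.mem_image, Finset.mem_filter, not_exists, not_and]
      exact fun w' hw' he => hxw (p.injOn hw'.1 hw he ▸ hw'.2)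
  obtain ⟨q, hle, hdom, -⟩ := p.exists_le_extend hfree hns hx hv hmatch
  exact ⟨q, hle, hdom ▸ Finset.mem_union_right _ (mem_orbit_self x)⟩

lemma exists_le_mem_ran (hR : R.HasPropR) (hfree : IsFreeOn ρ S)
    (hns : NonSingularAction R ρ) (p : PartialIso ρ S) (y : V) : ∃ q, p ≤ q ∧ y ∈ q.ran := by
  obtain ⟨q, hle, hy⟩ := p.symm.exists_le_mem_dom hR hfree hns y
  exact ⟨q.symm, symm_le_symm hle, hy⟩

lemma exists_le_subset_dom (hR : R.HasPropR) (hfree : IsFreeOn ρ S)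
    (hns : NonSingularAction R ρ) (p : PartialIso ρ S) (A : Finset V) :
    ∃ q, p ≤ q ∧ A ⊆ q.dom := by
  induction A using Finset.induction_on with
  | empty => exact ⟨p, le_rfl, Finset.empty_subset _⟩
  | insert x A _ ih =>
    obtain ⟨q, hle, hA⟩ := ih
    obtain ⟨q', hle', hx⟩ := q.exists_le_mem_dom hR hfree hns x
    exact ⟨q', hle.trans hle', Finset.insert_subset hx (hA.trans hle'.1)⟩

end PartialIso

section Forcing

variable {ρ : Γ →* (R ≃g R)} {S : Subgroup Γ}

def Extends (β : R ≃g R) (p : PartialIso ρ S) : Prop := ∀ x ∈ p.dom, β x = p x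

lemma Extends.mono {β : R ≃g R} {p q : PartialIso ρ S} (h : Extends β q) (hle : p ≤ q) :
    Extends β p :=
  fun x hx => by rw [h x (hle.1 hx), hle.2 x hx]

lemma Extends.symm_apply {β : R ≃g R} {p : PartialIso ρ S} (h : Extends β p) {x : V}
    (hx : x ∈ p.dom) : β.symm (p x) = x := by
  rw [← h x hx, RelIso.symm_apply_apply]

variable (ρ) in
def IsDeformation (Γ₁ Γ₂ : Subgroup Γ) (β : R ≃g R) (π : Γ →* (R ≃g R)) : Prop :=
  (∀ g : Γ₁, π g = ρ g) ∧ (∀ g : Γ₂, π g = β⁻¹ * ρ g * β)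

variable {Γ₁ Γ₂ : Subgroup Γ} {β : R ≃g R} {π : Γ →* (R ≃g R)}

lemma IsDeformation.apply_of_mem_left (h : IsDeformation ρ Γ₁ Γ₂ β π) {a : Γ} (ha : a ∈ Γ₁)
    (x : V) : π a x = ρ a x := by
  rw [h.1 ⟨a, ha⟩]

lemma IsDeformation.apply_of_mem_right (h : IsDeformation ρ Γ₁ Γ₂ β π) {b : Γ} (hb : b ∈ Γ₂)
    (x : V) : π b x = β.symm (ρ b (β x)) := by
  rw [h.2 ⟨b, hb⟩]; rfl

variable [Fintype S]

/-- One letter pair `c b` of a reduced word: with `v` and `u` supplied by property (F), the orbits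
`z ↦ v` and `u ↦ ρ b v` are added, so that `c β⁻¹ b β` sends `z` to `ρ c u`. -/
lemma PartialIso.exists_le_step (hF : PropertyF R ρ) (hfree : IsFreeOn ρ S)
    (hns : NonSingularAction R ρ) (q : PartialIso ρ S) {z : V} (hz : IsFresh R q.dom z) {b : Γ}
    (hb : b ∉ S) (c : Γ) (B : Finset V) :
    ∃ q', q ≤ q' ∧ ∃ u, ρ c u ∉ B ∧ (c ∉ S → IsFresh R q'.dom (ρ c u)) ∧
      ∀ β : R ≃g R, Extends β q' → β.symm (ρ b (β z)) = u := by
  obtain ⟨v, hv, hbv, hbv_orbit⟩ := exists_fresh_translate (S := S) hF q.ran q.ran b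
  obtain ⟨q₁, hle₁, hdom₁, hran₁, hq₁z⟩ := q.exists_le_extend_of_isFresh hfree hns hz hv
  have hm : IsFresh R q₁.ran (ρ b v) := hran₁ ▸ hbv.union_orbit hns (hbv_orbit hb)
  obtain ⟨u, hu, hcu, hcu_orbit⟩ := exists_fresh_translate (S := S) hF q₁.dom (q₁.dom ∪ B) c
  obtain ⟨q₂, hle₂, hdom₂, -, hq₂u⟩ := q₁.exists_le_extend_of_isFresh hfree hns hu hm
  refine ⟨q₂, hle₁.trans hle₂, u, fun h => hcu.1 (Finset.mem_union_right _ h),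
    fun hc => hdom₂ ▸ (hcu.mono Finset.subset_union_left).union_orbit hns (hcu_orbit hc),
    fun β hβ => ?_⟩
  have hz₁ : z ∈ q₁.dom := hdom₁ ▸ Finset.mem_union_right _ (mem_orbit_self z)
  have hu₂ : u ∈ q₂.dom := hdom₂ ▸ Finset.mem_union_right _ (mem_orbit_self u)
  rw [hβ z (hle₂.1 hz₁), hle₂.2 z hz₁, hq₁z, ← hq₂u, hβ.symm_apply hu₂]

lemma PartialIso.exists_le_chunkProd_apply (hF : PropertyF R ρ) (hfree : IsFreeOn ρ S)
    (hns : NonSingularAction R ρ) (q : PartialIso ρ S) {z : V} (hz : IsFresh R q.dom z)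
    (ps : List (Γ × Γ)) (hps : ∀ pr ∈ ps, IsReducedPair Γ₁ Γ₂ S pr) :
    ∃ q', q ≤ q' ∧ ∃ z', IsFresh R q'.dom z' ∧ ∀ β π, Extends β q' →
      IsDeformation ρ Γ₁ Γ₂ β π → π (chunkProd ps) z = z' := by
  induction ps with
  | nil => exact ⟨q, le_rfl, z, hz, fun β π _ _ => by simp⟩
  | cons pr ps ih =>
    obtain ⟨hc, hcS, hb, hbS⟩ := hps pr List.mem_cons_self
    obtain ⟨q₁, hle₁, z₁, hz₁, hq₁⟩ := ih fun pr hpr => hps pr (List.mem_cons_of_mem _ hpr)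
    obtain ⟨q₂, hle₂, u, -, hu, hq₂⟩ := q₁.exists_le_step hF hfree hns hz₁ hbS pr.1 ∅
    refine ⟨q₂, hle₁.trans hle₂, ρ pr.1 u, hu hcS, fun β π hβ hπ => ?_⟩
    rw [chunkProd_cons, map_mul, map_mul, RelIso.mul_apply, RelIso.mul_apply,
      hq₁ β π (hβ.mono hle₂) hπ, hπ.apply_of_mem_right hb, hq₂ β hβ, hπ.apply_of_mem_left hc]

/-- The innermost letter `c₀` is absorbed by starting from a vertex `y` with `ρ c₀ y` fresh. -/
lemma PartialIso.exists_le_apply_ne (hF : PropertyF R ρ) (hfree : IsFreeOn ρ S)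
    (hns : NonSingularAction R ρ) (p : PartialIso ρ S) {g : Γ} (hg : HasReducedForm Γ₁ Γ₂ S g)
    (hg₁ : g ∉ Γ₁) :
    ∃ q, p ≤ q ∧ ∃ y, ∀ β π, Extends β q → IsDeformation ρ Γ₁ Γ₂ β π → π g y ≠ y := by
  obtain hg | ⟨c, hc, b, hb, hbS, ps, hps, c₀, hc₀, rfl⟩ := hg
  · exact absurd hg hg₁
  obtain ⟨y, -, hy, -⟩ := exists_fresh_translate (S := S) hF ∅ p.dom c₀
  obtain ⟨q₁, hle₁, z, hz, hq₁⟩ := p.exists_le_chunkProd_apply hF hfree hns hy ps hps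
  obtain ⟨q₂, hle₂, u, hu, -, hq₂⟩ := q₁.exists_le_step hF hfree hns hz hbS c {y}
  refine ⟨q₂, hle₁.trans hle₂, y, fun β π hβ hπ => ?_⟩
  rw [map_mul, map_mul, map_mul, RelIso.mul_apply, RelIso.mul_apply, RelIso.mul_apply,
    hπ.apply_of_mem_left hc₀, hq₁ β π (hβ.mono hle₂) hπ, hπ.apply_of_mem_right hb, hq₂ β hβ,
    hπ.apply_of_mem_left hc]
  simpa using hu

end Forcing

section Homogeneity

variable (R) in
def IsFinitePartialIso (L : Finset (V × V)) : Prop :=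
  ∀ pr ∈ L, ∀ pr' ∈ L, (pr.1 = pr'.1 ↔ pr.2 = pr'.2) ∧ (R.Adj pr.1 pr'.1 ↔ R.Adj pr.2 pr'.2)

lemma IsFinitePartialIso.eq_of_fst_eq {L : Finset (V × V)} (hL : IsFinitePartialIso R L)
    {pr pr' : V × V} (hpr : pr ∈ L) (hpr' : pr' ∈ L) (h : pr.1 = pr'.1) : pr = pr' :=
  Prod.ext h ((hL pr hpr pr' hpr').1.1 h)

lemma IsFinitePartialIso.eq_of_snd_eq {L : Finset (V × V)} (hL : IsFinitePartialIso R L)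
    {pr pr' : V × V} (hpr : pr ∈ L) (hpr' : pr' ∈ L) (h : pr.2 = pr'.2) : pr = pr' :=
  Prod.ext ((hL pr hpr pr' hpr').1.2 h) h

variable (ρ : Γ →* (R ≃g R)) (S : Subgroup Γ) in
/-- The conditions `HighlyCoreFreeWrt` imposes on `g` for the finite set `F`. -/
def Separates (g : Γ) (F : Finset V) : Prop :=
  (∀ u ∈ F, ∀ v ∈ F, ∀ σ ∈ S, ρ g u ≠ ρ σ v) ∧
  (∀ u ∈ F, ∀ v ∈ F, ¬ R.Adj (ρ g u) v) ∧
  (∀ u ∈ F, ∀ v ∈ F, u ≠ v → ∀ σ ∈ S, ∀ τ ∈ S, ρ σ (ρ g u) ≠ ρ τ (ρ g v)) ∧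
  (∀ u ∈ F, ∀ v ∈ F, ∀ σ ∈ S, σ ≠ 1 → ¬ R.Adj (ρ σ (ρ g u)) (ρ g v))

variable {ρ : Γ →* (R ≃g R)} {S : Subgroup Γ} {g : Γ} {F : Finset V} {u v : V}

lemma Separates.adj_apply_apply_iff (h : Separates ρ S g F) (hu : u ∈ F) (hv : v ∈ F) {σ : Γ}
    (hσ : σ ∈ S) : R.Adj (ρ g u) (ρ σ (ρ g v)) ↔ σ = 1 ∧ R.Adj u v := by
  by_cases hσ1 : σ = 1
  · simp [hσ1, (ρ g).map_adj_iff]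
  · rw [R.adj_comm]
    simpa [hσ1] using h.2.2.2 v hv u hu σ hσ hσ1

variable [Fintype S]

lemma Separates.apply_notMem_union (h : Separates ρ S g F) {D N : Finset V} (hD : D ⊆ F)
    (hN : N ⊆ F) (hu : u ∈ F) (huN : u ∉ N) :
    ρ g u ∉ D ∪ N.biUnion fun v => orbit ρ S (ρ g v) := by
  simp only [Finset.mem_union, Finset.mem_biUnion, mem_orbit, not_or, not_exists, not_and]
  refine ⟨fun hD' => h.1 u hu _ (hD hD') 1 (one_mem S) (by simp), fun v hv σ hσ hσv => ?_⟩
  exact h.2.2.1 u hu v (hN hv) (fun huv => huN (huv ▸ hv)) 1 (one_mem S) σ hσ (by simp [hσv])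

variable (p₁ : PartialIso ρ S) (s t : Γ) in
def MapsPairs (q : PartialIso ρ S) (M : Finset (V × V)) : Prop :=
  p₁ ≤ q ∧ (∀ pr ∈ M, q (ρ s pr.2) = ρ t (p₁ pr.1)) ∧
    q.dom = p₁.dom ∪ (M.image Prod.snd).biUnion (fun y => orbit ρ S (ρ s y)) ∧
    q.ran = p₁.ran ∪ (M.image fun pr => p₁ pr.1).biUnion (fun x => orbit ρ S (ρ t x))

lemma MapsPairs.mem_dom {p₁ q : PartialIso ρ S} {s t : Γ} {M : Finset (V × V)}
    (h : MapsPairs p₁ s t q M) {pr : V × V} (hpr : pr ∈ M) : ρ s pr.2 ∈ q.dom := by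
  rw [h.2.2.1, Finset.mem_union, Finset.mem_biUnion]
  exact Or.inr ⟨pr.2, Finset.mem_image_of_mem _ hpr, mem_orbit_self _⟩

/-- Separation leaves only the adjacencies between `ρ s y` and `ρ s y'`, which mirror those
between `x` and `x'`. -/
lemma MapsPairs.adj_iff {p₁ : PartialIso ρ S} {L : Finset (V × V)} (hL : IsFinitePartialIso R L)
    (hdom : ∀ pr ∈ L, pr.1 ∈ p₁.dom) {s t : Γ} (hs : Separates ρ S s (p₁.dom ∪ L.image Prod.snd))
    (ht : Separates ρ S t p₁.ran) {q : PartialIso ρ S} {M : Finset (V × V)}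
    (h : MapsPairs p₁ s t q M) (hML : M ⊆ L) {a : V × V} (haL : a ∈ L) :
    ∀ w ∈ q.dom, R.Adj (ρ t (p₁ a.1)) (q w) ↔ R.Adj (ρ s a.2) w := by
  have hsnd : ∀ pr ∈ L, pr.2 ∈ p₁.dom ∪ L.image Prod.snd :=
    fun pr hpr => Finset.mem_union_right _ (Finset.mem_image_of_mem _ hpr)
  have hfst : ∀ pr ∈ L, p₁ pr.1 ∈ p₁.ran := fun pr hpr => p₁.map_dom _ (hdom pr hpr)
  intro w hw
  rw [h.2.2.1, Finset.mem_union, Finset.mem_biUnion] at hw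
  obtain hw | ⟨_, hy, hw⟩ := hw
  · rw [h.1.2 w hw]
    exact iff_of_false (ht.2.1 _ (hfst a haL) _ (p₁.map_dom w hw))
      (hs.2.1 _ (hsnd a haL) w (Finset.mem_union_left _ hw))
  obtain ⟨pr, hpr, rfl⟩ := Finset.mem_image.1 hy
  obtain ⟨σ, hσ, rfl⟩ := mem_orbit.1 hw
  rw [q.map_apply σ hσ _ (h.mem_dom hpr), h.2.1 pr hpr,
    ht.adj_apply_apply_iff (hfst a haL) (hfst pr (hML hpr)) hσ,
    hs.adj_apply_apply_iff (hsnd a haL) (hsnd pr (hML hpr)) hσ,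
    p₁.adj_iff _ (hdom a haL) _ (hdom pr (hML hpr)), (hL a haL pr (hML hpr)).2]

/-- Separation makes the new orbit disjoint from the old domain and range. -/
lemma MapsPairs.exists_insert (hfree : IsFreeOn ρ S) (hns : NonSingularAction R ρ)
    {p₁ : PartialIso ρ S} {L : Finset (V × V)} (hL : IsFinitePartialIso R L)
    (hdom : ∀ pr ∈ L, pr.1 ∈ p₁.dom) {s t : Γ} (hs : Separates ρ S s (p₁.dom ∪ L.image Prod.snd))
    (ht : Separates ρ S t p₁.ran) {q : PartialIso ρ S} {M : Finset (V × V)}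
    (h : MapsPairs p₁ s t q M) {a : V × V} (haM : a ∉ M) (hML : insert a M ⊆ L) :
    ∃ q', MapsPairs p₁ s t q' (insert a M) := by
  have hsnd : L.image Prod.snd ⊆ p₁.dom ∪ L.image Prod.snd := Finset.subset_union_right
  have hfst : L.image (fun pr => p₁ pr.1) ⊆ p₁.ran := by
    simpa [Finset.image_subset_iff] using fun pr hpr => p₁.map_dom _ (hdom pr hpr)
  have haL : a ∈ L := hML (Finset.mem_insert_self a M)
  have hML' : M ⊆ L := (Finset.subset_insert a M).trans hML
  have ⟨hle, hval, hqdom, hqran⟩ := h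
  have hz : ρ s a.2 ∉ q.dom := by
    refine hqdom ▸ hs.apply_notMem_union Finset.subset_union_left
      ((Finset.image_subset_image hML').trans hsnd) (hsnd (Finset.mem_image_of_mem _ haL)) ?_
    simp only [Finset.mem_image, not_exists, not_and]
    exact fun pr hpr h => haM (hL.eq_of_snd_eq haL (hML' hpr) h.symm ▸ hpr)
  have hv : ρ t (p₁ a.1) ∉ q.ran := by
    refine hqran ▸ ht.apply_notMem_union subset_rfl
      ((Finset.image_subset_image hML').trans hfst) (hfst (Finset.mem_image_of_mem _ haL)) ?_
    simp only [Finset.mem_image, not_exists, not_and]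
    refine fun pr hpr h => haM (hL.eq_of_fst_eq haL (hML' hpr) ?_ ▸ hpr)
    exact p₁.injOn (hdom a haL) (hdom pr (hML' hpr)) h.symm
  obtain ⟨q', hle', hdom', hran', hval'⟩ :=
    q.exists_le_extend hfree hns hz hv (h.adj_iff hL hdom hs ht hML' haL)
  refine ⟨q', hle.trans hle', fun pr hpr => ?_, ?_, ?_⟩
  · rcases Finset.mem_insert.1 hpr with rfl | hpr
    exacts [hval', (hle'.2 _ (h.mem_dom hpr)).trans (hval pr hpr)]
  · rw [hdom', hqdom, Finset.image_insert, Finset.biUnion_insert]; ac_rfl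
  · rw [hran', hqran, Finset.image_insert, Finset.biUnion_insert]; ac_rfl

lemma PartialIso.exists_le_map_pairs (hfree : IsFreeOn ρ S) (hns : NonSingularAction R ρ)
    (p₁ : PartialIso ρ S) {L : Finset (V × V)} (hL : IsFinitePartialIso R L)
    (hdom : ∀ pr ∈ L, pr.1 ∈ p₁.dom) {s t : Γ} (hs : Separates ρ S s (p₁.dom ∪ L.image Prod.snd))
    (ht : Separates ρ S t p₁.ran) :
    ∃ q, p₁ ≤ q ∧ ∀ pr ∈ L, ρ s pr.2 ∈ q.dom ∧ q (ρ s pr.2) = ρ t (p₁ pr.1) := by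
  suffices ∀ M ⊆ L, ∃ q, MapsPairs p₁ s t q M by
    obtain ⟨q, hq⟩ := this L subset_rfl
    exact ⟨q, hq.1, fun pr hpr => ⟨hq.mem_dom hpr, hq.2.1 pr hpr⟩⟩
  intro M
  induction M using Finset.induction_on with
  | empty => exact fun _ => ⟨p₁, le_rfl, by simp, by simp, by simp⟩
  | insert a M haM ih =>
    intro hML
    obtain ⟨q, hq⟩ := ih ((Finset.subset_insert a M).trans hML)
    exact hq.exists_insert hfree hns hL hdom hs ht haM hML

/-- The witness is `s⁻¹ t`, with `s ∈ Γ₁` and `t ∈ Γ₂` separating the current domain and range. -/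
lemma PartialIso.exists_le_realize (hR : R.HasPropR) (hfree : IsFreeOn ρ S)
    (hns : NonSingularAction R ρ) {Γ₁ Γ₂ : Subgroup Γ} (hcf₁ : HighlyCoreFreeWrt R ρ S Γ₁)
    (hcf₂ : HighlyCoreFreeWrt R ρ S Γ₂) (p : PartialIso ρ S) {L : Finset (V × V)}
    (hL : IsFinitePartialIso R L) :
    ∃ q, p ≤ q ∧ ∃ g, ∀ β π, Extends β q → IsDeformation ρ Γ₁ Γ₂ β π →
      ∀ pr ∈ L, π g pr.1 = pr.2 := by
  obtain ⟨p₁, hle₁, hsub⟩ := p.exists_le_subset_dom hR hfree hns (L.image Prod.fst)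
  have hdom : ∀ pr ∈ L, pr.1 ∈ p₁.dom := fun pr hpr => hsub (Finset.mem_image_of_mem _ hpr)
  obtain ⟨s, hs, hs_sep⟩ := hcf₁ (p₁.dom ∪ L.image Prod.snd)
  obtain ⟨t, ht, ht_sep⟩ := hcf₂ p₁.ran
  obtain ⟨q, hle, hq⟩ := p₁.exists_le_map_pairs hfree hns hL hdom hs_sep ht_sep
  refine ⟨q, hle₁.trans hle, s⁻¹ * t, fun β π hβ hπ pr hpr => ?_⟩
  rw [map_mul, RelIso.mul_apply, hπ.apply_of_mem_right ht, hπ.apply_of_mem_left (inv_mem hs),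
    hβ _ (hle.1 (hdom pr hpr)), hle.2 _ (hdom pr hpr), ← (hq pr hpr).2,
    hβ.symm_apply (hq pr hpr).1, inv_apply_apply]

lemma isHomogeneousAction_iff (π : Γ →* (R ≃g R)) :
    IsHomogeneousAction R π ↔
      ∀ L, IsFinitePartialIso R L → ∃ g, ∀ pr ∈ L, π g pr.1 = pr.2 := by
  constructor
  · intro hπ L hL
    let φ : V → V := fun x => if h : ∃ y, (x, y) ∈ L then h.choose else x
    have hφ : ∀ pr ∈ L, φ pr.1 = pr.2 := by
      intro pr hpr
      have h : ∃ y, (pr.1, y) ∈ L := ⟨pr.2, hpr⟩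
      simp only [φ, dif_pos h]
      exact (hL _ h.choose_spec pr hpr).1.1 rfl
    have hA : ∀ x ∈ L.image Prod.fst, ∃ pr ∈ L, pr.1 = x := by simp
    obtain ⟨g, hg⟩ := hπ (L.image Prod.fst) φ
      (fun x hx x' hx' h => by
        obtain ⟨pr, hpr, rfl⟩ := hA x hx
        obtain ⟨pr', hpr', rfl⟩ := hA x' hx'
        rw [hφ pr hpr, hφ pr' hpr'] at h
        exact (hL pr hpr pr' hpr').1.2 h)
      (fun x hx x' hx' => by
        obtain ⟨pr, hpr, rfl⟩ := hA x hx
        obtain ⟨pr', hpr', rfl⟩ := hA x' hx'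
        rw [hφ pr hpr, hφ pr' hpr']
        exact (hL pr hpr pr' hpr').2)
    exact ⟨g, fun pr hpr => (hg pr.1 (Finset.mem_image_of_mem _ hpr)).trans (hφ pr hpr)⟩
  · intro hπ A φ hinj hadj
    obtain ⟨g, hg⟩ := hπ (A.image fun a => (a, φ a)) (by
      simp only [IsFinitePartialIso, Finset.mem_image, forall_exists_index, and_imp]
      rintro _ a ha rfl _ b hb rfl
      exact ⟨⟨congrArg φ, fun h => hinj ha hb h⟩, hadj a ha b hb⟩)
    exact ⟨g, fun a ha => hg (a, φ a) (Finset.mem_image_of_mem _ ha)⟩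

end Homogeneity

section Generic

variable {ρ : Γ →* (R ≃g R)} {S : Subgroup Γ}

variable (ρ S) in
abbrev Commutant : Type _ := {β : R ≃g R // ∀ σ ∈ S, β * ρ σ = ρ σ * β}

noncomputable def PartialIso.restrict [Fintype S] (α : Commutant ρ S) (E : Finset V) :
    PartialIso ρ S where
  dom := E.biUnion (orbit ρ S)
  ran := (E.biUnion (orbit ρ S)).image α.1
  toFun := α.1
  invFun := α.1.symm
  map_dom _ hx := Finset.mem_image_of_mem _ hx
  map_ran y hy := by
    obtain ⟨x, hx, rfl⟩ := Finset.mem_image.1 hy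
    simpa using hx
  left_inv x _ := α.1.symm_apply_apply x
  right_inv y _ := α.1.apply_symm_apply y
  adj_iff _ _ _ _ := α.1.map_adj_iff
  apply_mem_dom σ hσ x hx := by
    simp only [Finset.mem_biUnion] at hx ⊢
    obtain ⟨e, he, hx⟩ := hx
    obtain ⟨τ, hτ, rfl⟩ := mem_orbit.1 hx
    exact ⟨e, he, by rw [← apply_mul]; exact apply_mem_orbit (mul_mem hσ hτ) e⟩
  map_apply σ hσ x _ := congrArg (· x) (α.2 σ hσ)

lemma exists_extends_of_monotone {seq : ℕ → PartialIso ρ S} (hseq : Monotone seq)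
    (hdom : ∀ x, ∃ n, x ∈ (seq n).dom) (hran : ∀ y, ∃ n, y ∈ (seq n).ran) :
    ∃ β : Commutant ρ S, ∀ n, Extends β.1 (seq n) := by
  choose N hN using hdom
  let f : V → V := fun x => seq (N x) x
  have hf : ∀ n, ∀ x ∈ (seq n).dom, f x = seq n x := by
    intro n x hx
    rcases le_total (N x) n with h | h
    · exact ((hseq h).2 x (hN x)).symm
    · exact (hseq h).2 x hx
  have hf₂ : ∀ x y, ∃ n, f x = seq n x ∧ f y = seq n y ∧ x ∈ (seq n).dom ∧ y ∈ (seq n).dom :=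
    fun x y => ⟨max (N x) (N y), hf _ x ((hseq (le_max_left _ _)).1 (hN x)),
      hf _ y ((hseq (le_max_right _ _)).1 (hN y)), (hseq (le_max_left _ _)).1 (hN x),
      (hseq (le_max_right _ _)).1 (hN y)⟩
  have hinj : Injective f := fun x y h => by
    obtain ⟨n, hx, hy, hxn, hyn⟩ := hf₂ x y
    exact (seq n).injOn hxn hyn (hx ▸ hy ▸ h)
  have hsurj : Surjective f := fun y => by
    obtain ⟨n, hn⟩ := hran y
    exact ⟨(seq n).invFun y, (hf n _ ((seq n).map_ran y hn)).trans ((seq n).right_inv y hn)⟩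
  let β : R ≃g R := ⟨Equiv.ofBijective f ⟨hinj, hsurj⟩, fun {x y} => by
    obtain ⟨n, hx, hy, hxn, hyn⟩ := hf₂ x y
    exact (congrArg₂ R.Adj hx hy).to_iff.trans ((seq n).adj_iff x hxn y hyn)⟩
  refine ⟨⟨β, fun σ hσ => RelIso.ext fun x => ?_⟩, fun n x hx => hf n x hx⟩
  change f (ρ σ x) = ρ σ (f x)
  rw [hf _ x (hN x), hf _ _ ((seq (N x)).apply_mem_dom σ hσ x (hN x)),
    (seq _).map_apply σ hσ x (hN x)]

/-- Rasiowa–Sikorski, with the extra requirements `x ∈ dom` and `y ∈ ran` making the union of the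
generic sequence an automorphism. -/
lemma exists_extends_forall_mem [Fintype S] [Countable V] (hR : R.HasPropR) (hfree : IsFreeOn ρ S)
    (hns : NonSingularAction R ρ) {ι : Type*} [Countable ι] (D : ι → Set (PartialIso ρ S))
    (hD : ∀ i, IsCofinal (D i)) (p₀ : PartialIso ρ S) :
    ∃ β : Commutant ρ S, Extends β.1 p₀ ∧ ∀ i, ∃ q ∈ D i, Extends β.1 q := by
  let 𝒟 : V ⊕ V ⊕ ι → Order.Cofinal (PartialIso ρ S)
    | .inl x => ⟨{q | x ∈ q.dom}, fun p => (p.exists_le_mem_dom hR hfree hns x).imp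
        fun _ h => ⟨h.2, h.1⟩⟩
    | .inr (.inl y) => ⟨{q | y ∈ q.ran}, fun p => (p.exists_le_mem_ran hR hfree hns y).imp
        fun _ h => ⟨h.2, h.1⟩⟩
    | .inr (.inr i) => ⟨D i, hD i⟩
  have : Encodable (V ⊕ V ⊕ ι) := Encodable.ofCountable _
  have hmem := Order.sequenceOfCofinals.encode_mem p₀ 𝒟
  obtain ⟨β, hβ⟩ := exists_extends_of_monotone (Order.sequenceOfCofinals.monotone p₀ 𝒟)
    (fun x => ⟨_, hmem (.inl x)⟩) (fun y => ⟨_, hmem (.inr (.inl y))⟩)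
  exact ⟨β, hβ 0, fun i => ⟨_, hmem (.inr (.inr i)), hβ _⟩⟩

end Generic

section Topology

lemma isOpen_setOf_apply_eq (x y : V) : IsOpen {β : R ≃g R | β x = y} := by
  let _ : TopologicalSpace V := ⊥
  have : DiscreteTopology V := ⟨rfl⟩
  have hc : Continuous fun p : (V → V) × (V → V) => p.1 x :=
    (continuous_apply x).comp continuous_fst
  exact isOpen_induced (hc.isOpen_preimage {y} (isOpen_discrete _))

lemma isOpen_setOf_symm_apply_eq (x y : V) : IsOpen {β : R ≃g R | β.symm x = y} := by
  let _ : TopologicalSpace V := ⊥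
  have : DiscreteTopology V := ⟨rfl⟩
  have hc : Continuous fun p : (V → V) × (V → V) => p.2 x :=
    (continuous_apply x).comp continuous_snd
  exact isOpen_induced (hc.isOpen_preimage {y} (isOpen_discrete _))

lemma isOpen_setOf_const_imp {X : Type*} [TopologicalSpace X] (p : Prop) {q : X → Prop}
    (h : IsOpen {x | q x}) : IsOpen {x | p → q x} := by
  by_cases hp : p <;> simp [hp, h]

lemma exists_finset_of_isOpen {U : Set (R ≃g R)} (hU : IsOpen U) {α : R ≃g R} (hα : α ∈ U) :
    ∃ E : Finset V, ∀ β : R ≃g R, (∀ x ∈ E, β x = α x) → β ∈ U := by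
  let _ : TopologicalSpace V := ⊥
  obtain ⟨W, hW, rfl⟩ := isOpen_induced_iff.1 hU
  obtain ⟨u, v, hu, hv, hαu, hαv, huv⟩ := isOpen_prod_iff.1 hW _ _ hα
  obtain ⟨I₁, u', hu', hI₁⟩ := isOpen_pi_iff.1 hu _ hαu
  obtain ⟨I₂, v', hv', hI₂⟩ := isOpen_pi_iff.1 hv _ hαv
  refine ⟨I₁ ∪ I₂.image α.symm, fun β hβ => huv ⟨hI₁ fun x hx => ?_, hI₂ fun y hy => ?_⟩⟩
  · change β x ∈ u' x
    rw [hβ x (Finset.mem_union_left _ hx)]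
    exact (hu' x hx).2
  · change β.symm y ∈ v' y
    rw [(β.symm_apply_eq.2 ((hβ _ (Finset.mem_union_right _ (Finset.mem_image_of_mem _ hy))).trans
      (α.apply_symm_apply y)).symm)]
    exact (hv' y hy).2

end Topology

section Deformation

variable {Γ : Type} [Group Γ] {V : Type} {R : SimpleGraph V} {ρ : Γ →* (R ≃g R)}
  {Γ₁ Γ₂ S : Subgroup Γ} {h₁ : S ≤ Γ₁} {h₂ : S ≤ Γ₂}

lemma IsAmalgamatedProduct.existsUnique_isDeformation
    (hamalg : IsAmalgamatedProduct Γ₁ Γ₂ S h₁ h₂) (α : Commutant ρ S) :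
    ∃! π, IsDeformation ρ Γ₁ Γ₂ α.1 π := by
  have h := hamalg (R ≃g R) (ρ.comp Γ₁.subtype)
    ((MulAut.conj α.1⁻¹).toMonoidHom.comp (ρ.comp Γ₂.subtype)) fun x hx => by
      simp [mul_assoc, ← α.2 x hx]
  simpa [IsDeformation, MulAut.conj_apply, mul_assoc] using h

noncomputable def deformed (hamalg : IsAmalgamatedProduct Γ₁ Γ₂ S h₁ h₂) (α : Commutant ρ S) :
    Γ →* (R ≃g R) :=
  (IsAmalgamatedProduct.existsUnique_isDeformation hamalg α).exists.choose

lemma isDeformation_deformed (hamalg : IsAmalgamatedProduct Γ₁ Γ₂ S h₁ h₂) (α : Commutant ρ S) :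
    IsDeformation ρ Γ₁ Γ₂ α.1 (deformed hamalg α) :=
  (IsAmalgamatedProduct.existsUnique_isDeformation hamalg α).exists.choose_spec

lemma setOf_exists_deformation_eq (hamalg : IsAmalgamatedProduct Γ₁ Γ₂ S h₁ h₂)
    (P : (Γ →* (R ≃g R)) → Prop) :
    {α : Commutant ρ S | ∃ π : Γ →* (R ≃g R), (∀ g : Γ₁, π g = ρ g) ∧
      (∀ g : Γ₂, π g = α.1⁻¹ * ρ g * α.1) ∧ P π} = {α | P (deformed hamalg α)} := by
  ext α
  constructor
  · rintro ⟨π, h₁, h₂, hP⟩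
    change P (deformed hamalg α)
    rwa [← (IsAmalgamatedProduct.existsUnique_isDeformation hamalg α).unique ⟨h₁, h₂⟩
      (isDeformation_deformed hamalg α)]
  · exact fun hP =>
      ⟨_, (isDeformation_deformed hamalg α).1, (isDeformation_deformed hamalg α).2, hP⟩

lemma isOpen_setOf_deformed_apply_eq (hamalg : IsAmalgamatedProduct Γ₁ Γ₂ S h₁ h₂) (g : Γ)
    (z y : V) : IsOpen {α : Commutant ρ S | deformed hamalg α g z = y} := by
  let H : Subgroup Γ :=
    { carrier := {g | ∀ z y, IsOpen {α : Commutant ρ S | deformed hamalg α g z = y}}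
      one_mem' := fun z y => by simp [isOpen_const]
      mul_mem' := fun {g h} hg hh z y => by
        have : {α : Commutant ρ S | deformed hamalg α (g * h) z = y} =
            ⋃ w, {α | deformed hamalg α h z = w} ∩ {α | deformed hamalg α g w = y} := by
          ext α; simp [RelIso.mul_apply]
        rw [this]
        exact isOpen_iUnion fun w => (hh z w).inter (hg w y)
      inv_mem' := fun {g} hg z y => by
        have : {α : Commutant ρ S | deformed hamalg α g⁻¹ z = y} =
            {α | deformed hamalg α g y = z} := by
          ext α
          change deformed hamalg α g⁻¹ z = y ↔ deformed hamalg α g y = z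
          rw [map_inv]
          exact (RelIso.symm_apply_eq _).trans eq_comm
        rw [this]
        exact hg y z }
  have hΓ₁ : Γ₁ ≤ H := fun a ha z y => by
    simp only [(isDeformation_deformed hamalg _).apply_of_mem_left ha]
    exact isOpen_const
  have hΓ₂ : Γ₂ ≤ H := fun b hb z y => by
    have : {α : Commutant ρ S | deformed hamalg α b z = y} =
        ⋃ w, {α | α.1 z = w} ∩ {α | α.1.symm (ρ b w) = y} := by
      ext α; simp [(isDeformation_deformed hamalg _).apply_of_mem_right hb]
    rw [this]
    exact isOpen_iUnion fun w => ((isOpen_setOf_apply_eq z w).preimage continuous_subtype_val).inter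
      ((isOpen_setOf_symm_apply_eq _ y).preimage continuous_subtype_val)
  have hH : ⊤ ≤ H := IsAmalgamatedProduct.sup_eq_top hamalg ▸ sup_le hΓ₁ hΓ₂
  exact hH (Subgroup.mem_top g) z y

lemma isGδ_setOf_injective_isHomogeneous [Countable Γ] [Countable V]
    (hamalg : IsAmalgamatedProduct Γ₁ Γ₂ S h₁ h₂) :
    IsGδ {α : Commutant ρ S | Injective (deformed hamalg α) ∧
      IsHomogeneousAction R (deformed hamalg α)} := by
  have hset : {α : Commutant ρ S | Injective (deformed hamalg α) ∧
      IsHomogeneousAction R (deformed hamalg α)} =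
      (⋂ g : Γ, {α | g ≠ 1 → ∃ z, deformed hamalg α g z ≠ z}) ∩
      ⋂ L : Finset (V × V), {α | IsFinitePartialIso R L →
        ∃ g, ∀ pr ∈ L, deformed hamalg α g pr.1 = pr.2} := by
    ext α
    simp only [Set.mem_inter_iff, Set.mem_iInter, Set.mem_ofPred_eq, isHomogeneousAction_iff,
      injective_iff_map_eq_one, RelIso.ext_iff, RelIso.one_apply]
    refine and_congr_left' (forall_congr' fun g => ?_)
    rw [← not_imp_not, not_forall]
  rw [hset]
  refine (IsGδ.iInter_of_isOpen fun g => ?_).inter (IsGδ.iInter_of_isOpen fun L => ?_)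
  · refine isOpen_setOf_const_imp _ ?_
    have : {α : Commutant ρ S | ∃ z, deformed hamalg α g z ≠ z} =
        ⋃ z, ⋃ y ∈ ({z}ᶜ : Set V), {α | deformed hamalg α g z = y} := by
      ext α; simp
    rw [this]
    exact isOpen_iUnion fun z => isOpen_biUnion fun y _ =>
      isOpen_setOf_deformed_apply_eq hamalg g z y
  · refine isOpen_setOf_const_imp _ ?_
    have : {α : Commutant ρ S | ∃ g, ∀ pr ∈ L, deformed hamalg α g pr.1 = pr.2} =
        ⋃ g, ⋂ pr ∈ L, {α | deformed hamalg α g pr.1 = pr.2} := by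
      ext α; simp
    rw [this]
    exact isOpen_iUnion fun g => isOpen_biInter_finset fun pr _ =>
      isOpen_setOf_deformed_apply_eq hamalg g pr.1 pr.2

lemma exists_agree_injective_isHomogeneous [Fintype S] [Countable Γ] [Countable V]
    (hamalg : IsAmalgamatedProduct Γ₁ Γ₂ S h₁ h₂) (hR : R.HasPropR) (hfaith : Injective ρ)
    (hns : NonSingularAction R ρ) (hF : PropertyF R ρ) (hfree : IsFreeOn ρ S)
    (hcf₁ : HighlyCoreFreeWrt R ρ S Γ₁) (hcf₂ : HighlyCoreFreeWrt R ρ S Γ₂)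
    (α : Commutant ρ S) (E : Finset V) :
    ∃ β : Commutant ρ S, (∀ x ∈ E, β.1 x = α.1 x) ∧ Injective (deformed hamalg β) ∧
      IsHomogeneousAction R (deformed hamalg β) := by
  let D : Γ ⊕ Finset (V × V) → Set (PartialIso ρ S)
    | .inl g => {q | g ∈ Γ₁ ∨
        ∃ y, ∀ β π, Extends β q → IsDeformation ρ Γ₁ Γ₂ β π → π g y ≠ y}
    | .inr L => {q | IsFinitePartialIso R L →
        ∃ g, ∀ β π, Extends β q → IsDeformation ρ Γ₁ Γ₂ β π → ∀ pr ∈ L, π g pr.1 = pr.2}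
  have hD : ∀ i, IsCofinal (D i)
    | .inl g, p => by
      by_cases hg : g ∈ Γ₁
      · exact ⟨p, Or.inl hg, le_rfl⟩
      · obtain ⟨q, hle, hq⟩ := p.exists_le_apply_ne hF hfree hns
          (hasReducedForm (IsAmalgamatedProduct.sup_eq_top hamalg) h₁ h₂ g) hg
        exact ⟨q, Or.inr hq, hle⟩
    | .inr L, p => by
      by_cases hL : IsFinitePartialIso R L
      · obtain ⟨q, hle, hq⟩ := p.exists_le_realize hR hfree hns hcf₁ hcf₂ hL
        exact ⟨q, fun _ => hq, hle⟩
      · exact ⟨p, fun h => absurd h hL, le_rfl⟩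
  obtain ⟨β, hβ₀, hβ⟩ := exists_extends_forall_mem hR hfree hns D hD (PartialIso.restrict α E)
  have hπ := isDeformation_deformed hamalg β
  refine ⟨β, fun x hx => hβ₀ x (Finset.mem_biUnion.2 ⟨x, hx, mem_orbit_self x⟩),
    (injective_iff_map_eq_one _).2 fun g hg => ?_,
    (isHomogeneousAction_iff _).2 fun L hL => ?_⟩
  · obtain ⟨q, hq | ⟨y, hy⟩, hβq⟩ := hβ (.inl g)
    · exact hfaith (by rw [map_one, ← hπ.1 ⟨g, hq⟩, hg])
    · exact absurd (by rw [hg]; rfl) (hy β.1 _ hβq hπ)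
  · obtain ⟨q, hq, hβq⟩ := hβ (.inr L)
    obtain ⟨g, hg⟩ := hq hL
    exact ⟨g, hg β.1 _ hβq hπ⟩

lemma dense_setOf_injective_isHomogeneous [Fintype S] [Countable Γ] [Countable V]
    (hamalg : IsAmalgamatedProduct Γ₁ Γ₂ S h₁ h₂) (hR : R.HasPropR) (hfaith : Injective ρ)
    (hns : NonSingularAction R ρ) (hF : PropertyF R ρ) (hfree : IsFreeOn ρ S)
    (hcf₁ : HighlyCoreFreeWrt R ρ S Γ₁) (hcf₂ : HighlyCoreFreeWrt R ρ S Γ₂) :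
    Dense {α : Commutant ρ S | Injective (deformed hamalg α) ∧
      IsHomogeneousAction R (deformed hamalg α)} := by
  refine dense_iff_inter_open.2 fun U hU ⟨α, hα⟩ => ?_
  obtain ⟨W, hW, rfl⟩ := isOpen_induced_iff.1 hU
  obtain ⟨E, hE⟩ := exists_finset_of_isOpen hW hα
  obtain ⟨β, hβE, hβ⟩ := exists_agree_injective_isHomogeneous hamalg hR hfaith hns hF hfree
    hcf₁ hcf₂ α E
  exact ⟨β, hE β.1 hβE, hβ⟩

end Deformation

end HomogeneousAmalgam

/-- For an amalgamated free product `Γ = Γ₁ *_S Γ₂` over a finite subgroup `S`, acting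
faithfully, non-singularly, with property (F), with `S` acting freely and highly core-free
with respect to both factors, the set of `α ∈ Z` (the centraliser of `ρ(S)` in `Aut R`)
for which the deformed action `π_α` is faithful and homogeneous is a dense `G_δ` in `Z`. -/
theorem amalgam_dense_Gdelta {Γ : Type} [Group Γ] [Countable Γ]
    (Γ₁ Γ₂ S : Subgroup Γ) (h₁ : S ≤ Γ₁) (h₂ : S ≤ Γ₂) [Finite S]
    (hamalg : IsAmalgamatedProduct Γ₁ Γ₂ S h₁ h₂)
    {V : Type} [Countable V] (R : SimpleGraph V) (hR : R.HasPropR)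
    (ρ : Γ →* (R ≃g R)) (hfaith : Function.Injective ρ)
    (hns : NonSingularAction R ρ) (hF : PropertyF R ρ)
    (hfree : ∀ σ ∈ S, ∀ x : V, ρ σ x = x → σ = 1)
    (hhcf₁ : HighlyCoreFreeWrt R ρ S Γ₁) (hhcf₂ : HighlyCoreFreeWrt R ρ S Γ₂) :
    IsGδ {α : {β : R ≃g R // ∀ σ ∈ S, β * ρ σ = ρ σ * β} |
        ∃ π : Γ →* (R ≃g R),
          (∀ g : Γ₁, π g = ρ g) ∧
          (∀ g : Γ₂, π g = (α : R ≃g R)⁻¹ * ρ g * (α : R ≃g R)) ∧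
          Function.Injective π ∧ IsHomogeneousAction R π} ∧
    Dense {α : {β : R ≃g R // ∀ σ ∈ S, β * ρ σ = ρ σ * β} |
        ∃ π : Γ →* (R ≃g R),
          (∀ g : Γ₁, π g = ρ g) ∧
          (∀ g : Γ₂, π g = (α : R ≃g R)⁻¹ * ρ g * (α : R ≃g R)) ∧
          Function.Injective π ∧ IsHomogeneousAction R π} := by
  have := Fintype.ofFinite S
  rw [HomogeneousAmalgam.setOf_exists_deformation_eq hamalg
    fun π => Function.Injective π ∧ IsHomogeneousAction R π]
  exact ⟨HomogeneousAmalgam.isGδ_setOf_injective_isHomogeneous hamalg,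
    HomogeneousAmalgam.dense_setOf_injective_isHomogeneous hamalg hR hfaith hns hF hfree hhcf₁
      hhcf₂⟩
end
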